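/- arXiv:2312.14497 — 8 statements merged into one kernel-verified Lean document; each statement's English description precedes it below -/
import Mathlib

section
/- The n×n matrix J_n − I_n (all entries 1 except 0 on the diagonal) with its j-th column replaced by the all-ones vector has determinant (−1)^{n−1}. Consequently Σ_{j=1}^n det(matrix with j-th column replaced by ones) = (−1)^{n−1}·n ≠ 0. -/
open Matrix

lemma aux_det (n : ℕ) (hn : 1 ≤ n) (j : Fin n) :
    ((Matrix.of fun i k : Fin n => if i = k then (0 : ℝ) else 1).updateCol j
        (fun _ => 1)).det = (-1) ^ (n - 1) := by
  set M : Matrix (Fin n) (Fin n) ℝ :=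
    (Matrix.of fun i k : Fin n => if i = k then (0 : ℝ) else 1).updateCol j (fun _ => 1)
  set N : Matrix (Fin n) (Fin n) ℝ :=
    Matrix.of fun i k : Fin n => if i = j then (1 : ℝ) else if i = k then -1 else 0 with hN
  have hMN : M.det = N.det := by
    refine Matrix.det_eq_of_forall_row_eq_smul_add_const
      (fun i => if i = j then 0 else 1) j (by simp) ?_
    intro i k
    simp only [M, N, Matrix.updateCol_apply, Matrix.of_apply]
    by_cases hij : i = j <;> by_cases hkj : k = j <;> by_cases hik : i = k <;>
      simp_all
  have hlast : n - 1 < n := Nat.sub_lt hn one_pos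
  set l : Fin n := ⟨n - 1, hlast⟩
  set e : Equiv.Perm (Fin n) := Equiv.swap j l
  have hsub : (N.submatrix e e).det = N.det := Matrix.det_submatrix_equiv_self e N
  have htri : (N.submatrix e e).BlockTriangular OrderDual.toDual := by
    intro a b hab
    have hab' : (a : Fin n) < b := hab
    simp only [Matrix.submatrix_apply, N, Matrix.of_apply]
    have h1 : e a ≠ j := by
      intro h
      have ha : a = l := by
        have := congrArg e.symm h
        simpa [e, Equiv.swap_apply_right] using this
      have hb : (b : ℕ) ≤ n - 1 := Nat.le_sub_one_of_lt b.isLt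
      have : (a : ℕ) < n - 1 := lt_of_lt_of_le hab' hb
      rw [ha] at this
      exact absurd this (lt_irrefl _)
    have h2 : e a ≠ e b := fun h => hab'.ne (e.injective h)
    simp [h1, h2]
  have hdet : (N.submatrix e e).det = (-1) ^ (n - 1) := by
    rw [Matrix.det_of_lowerTriangular _ htri]
    have hdiag : ∀ i : Fin n, (N.submatrix e e) i i = if i = l then 1 else -1 := by
      intro i
      simp only [Matrix.submatrix_apply, N, Matrix.of_apply]
      by_cases hil : i = l
      · subst hil; simp [e, Equiv.swap_apply_right]
      · have : e i ≠ j := fun h => hil (by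
          have := congrArg e.symm h
          simpa [e, Equiv.swap_apply_right] using this)
        simp [this, hil]
    simp_rw [hdiag]
    rw [← Finset.mul_prod_erase _ _ (Finset.mem_univ l)]
    rw [Finset.prod_ite_of_false (fun i hi => (Finset.mem_erase.mp hi).1)]
    simp [Finset.card_erase_of_mem]
  rw [hMN, ← hsub, hdet]

/-- The matrix `Jₙ − Iₙ` with its `j`-th column replaced by ones has determinant `(−1)^{n−1}`;
hence the sum over `j` equals `(−1)^{n−1}·n ≠ 0`. -/
theorem det_ones_minus_id_updateColumn (n : ℕ) (hn : 1 ≤ n) :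
    (∀ j : Fin n,
      ((Matrix.of fun i k : Fin n => if i = k then (0 : ℝ) else 1).updateCol j
        (fun _ => 1)).det = (-1) ^ (n - 1)) ∧
    (∑ j : Fin n,
      ((Matrix.of fun i k : Fin n => if i = k then (0 : ℝ) else 1).updateCol j
        (fun _ => 1)).det = (-1) ^ (n - 1) * n) ∧
    ((-1 : ℝ) ^ (n - 1) * n ≠ 0) := by
  refine ⟨fun j => aux_det n hn j, ?_, ?_⟩
  · rw [Finset.sum_congr rfl (fun j _ => aux_det n hn j)]
    simp [mul_comm]
  · have : (n : ℝ) ≠ 0 := Nat.cast_ne_zero.mpr (by omega)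
    positivity
end

section
/- For an n×n real matrix A with all diagonal entries 0 (n ≥ 2), define Z(t) to be the matrix with entries exp(−t·A_{ij}). Then the function t ↦ det(Z(t)) is real analytic, its Taylor coefficients at t = 0 vanish in degrees 0 through n−2, and the coefficient of t^{n−1} equals (−1)^{n−1}·Σ_{j=1}^n det(A_j), where A_j is A with its j-th column replaced by the all-ones vector. -/
open Finset
open scoped Nat

private lemma sum_pow_expand {ι : Type*} [Fintype ι] (x : ι → ℝ) (k : ℕ) :
    (∑ i, x i) ^ k = ∑ f : Fin k → ι, ∏ j, x (f j) := by
  induction k with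
  | zero => simp
  | succ k ih =>
      rw [pow_succ, ih, ← Equiv.sum_comp (Fin.consEquiv fun _ => ι)]
      rw [Fintype.sum_prod_type, Finset.sum_comm]
      simp only [Fin.consEquiv_apply, Fin.prod_univ_succ, Fin.cons_zero, Fin.cons_succ,
        ← Finset.sum_mul, ← Finset.mul_sum]
      rw [mul_comm]

/-- For a matrix `A` with zero diagonal (`n ≥ 2`), `t ↦ det(exp(−t·A_{ij}))` is real analytic,
with Taylor coefficients at `0` vanishing in degrees `0,…,n−2`, and coefficient of `t^{n−1}`
equal to `(−1)^{n−1}·Σⱼ det(Aⱼ)`, `Aⱼ` being `A` with the `j`-th column replaced by ones. -/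
theorem det_exp_taylor (n : ℕ) (hn : 2 ≤ n) (A : Matrix (Fin n) (Fin n) ℝ)
    (hdiag : ∀ i, A i i = 0) :
    ∃ c : ℕ → ℝ,
      (∀ t : ℝ, HasSum (fun k => c k * t ^ k)
        ((Matrix.of fun i j : Fin n => Real.exp (-t * A i j)).det)) ∧
      (∀ t : ℝ, AnalyticAt ℝ
        (fun t : ℝ => (Matrix.of fun i j : Fin n => Real.exp (-t * A i j)).det) t) ∧
      (∀ k < n - 1, c k = 0) ∧
      c (n - 1) = (-1) ^ (n - 1) * ∑ j, (A.updateCol j (fun _ => 1)).det := by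
  obtain ⟨m, rfl⟩ : ∃ m, n = m + 2 := ⟨n - 2, by omega⟩
  
  -- sign as a real number
  set ε : Equiv.Perm (Fin (m + 2)) → ℝ := fun σ => (Equiv.Perm.sign σ : ℤ) with hε
  set S : Equiv.Perm (Fin (m + 2)) → ℝ := fun σ => ∑ i, A (σ i) i with hS
  -- the determinant as a finite sum of exponentials
  have hdet : ∀ t : ℝ, (Matrix.of fun i j : Fin (m + 2) => Real.exp (-t * A i j)).det
      = ∑ σ : Equiv.Perm (Fin (m + 2)), ε σ * Real.exp (-t * S σ) := by
    intro t
    rw [Matrix.det_apply']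
    refine Finset.sum_congr rfl fun σ _ => ?_
    rw [hS, Finset.mul_sum, Real.exp_sum]
    simp [hε, Matrix.of_apply]
  classical
  set D : ∀ k : ℕ, (Fin k → Fin (m+2)) → ℝ := fun k f =>
    (Matrix.of fun p q : Fin (m+2) => A p q ^ (univ.filter fun j => f j = q).card).det with hD
  -- expansion of the k-th power sum over permutations
  have hK : ∀ k : ℕ, (∑ σ : Equiv.Perm (Fin (m+2)), ε σ * S σ ^ k)
      = ∑ f : Fin k → Fin (m+2), D k f := by
    intro k
    have h1 : ∀ σ : Equiv.Perm (Fin (m+2)),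
        S σ ^ k = ∑ f : Fin k → Fin (m+2), ∏ j, A (σ (f j)) (f j) := by
      intro σ; rw [hS]; exact sum_pow_expand (fun i => A (σ i) i) k
    simp_rw [h1, Finset.mul_sum]
    rw [Finset.sum_comm]
    refine Finset.sum_congr rfl fun f _ => ?_
    have h2 : ∀ σ : Equiv.Perm (Fin (m+2)), ∏ j, A (σ (f j)) (f j)
        = ∏ q, A (σ q) q ^ (univ.filter fun j => f j = q).card := by
      intro σ
      rw [Finset.prod_comp (s := (univ : Finset (Fin k))) (fun q => A (σ q) q) f]
      refine Finset.prod_subset (Finset.subset_univ _) fun q _ hq => ?_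
      have : (univ.filter fun j => f j = q) = ∅ := by
        refine Finset.filter_eq_empty_iff.mpr fun j _ => ?_
        intro h; exact hq (Finset.mem_image.mpr ⟨j, Finset.mem_univ _, h⟩)
      rw [this]; simp
    simp_rw [h2]
    simp only [hD, Matrix.det_apply']
    refine Finset.sum_congr rfl fun σ _ => ?_
    rw [hε]
    simp [Matrix.of_apply]
  -- vanishing when the image is small
  have hD0 : ∀ (k : ℕ) (f : Fin k → Fin (m+2)), (univ.image f).card ≤ m → D k f = 0 := by
    intro k f hcard
    have h2 : 1 < (univ \ univ.image f).card := by
      rw [Finset.card_sdiff_of_subset (Finset.subset_univ _), Finset.card_univ, Fintype.card_fin]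
      omega
    obtain ⟨a, ha, b, hb, hab⟩ := Finset.one_lt_card.mp h2
    have hμ : ∀ q ∈ univ \ univ.image f, (univ.filter fun j => f j = q).card = 0 := by
      intro q hq
      rw [Finset.mem_sdiff] at hq
      rw [Finset.card_eq_zero]
      refine Finset.filter_eq_empty_iff.mpr fun j _ h => ?_
      exact hq.2 (Finset.mem_image.mpr ⟨j, Finset.mem_univ _, h⟩)
    refine Matrix.det_zero_of_column_eq hab fun p => ?_
    simp [Matrix.of_apply, hμ a ha, hμ b hb]
  -- main computation for k = m+1
  have hsurj : ∀ f : Fin (m+1) → Fin (m+2), Function.Injective f →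
      ∃ π : Equiv.Perm (Fin (m+2)), π ∘ Fin.succ = f := by
    intro f hf
    have hcard : (univ \ univ.image f).card = 1 := by
      rw [Finset.card_sdiff_of_subset (Finset.subset_univ _), Finset.card_univ, Fintype.card_fin,
        Finset.card_image_of_injective _ hf, Finset.card_univ, Fintype.card_fin]
      omega
    obtain ⟨j, hj⟩ := Finset.card_eq_one.mp hcard
    have hjmem : j ∈ univ \ univ.image f := by rw [hj]; exact Finset.mem_singleton_self j
    have hjnot : ∀ i, f i ≠ j := by
      intro i h
      exact (Finset.mem_sdiff.mp hjmem).2 (Finset.mem_image.mpr ⟨i, Finset.mem_univ _, h⟩)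
    set g : Fin (m+2) → Fin (m+2) := fun x => Fin.cases j f x with hg
    have hginj : Function.Injective g := by
      intro a b hab
      induction a using Fin.cases with
      | zero =>
          induction b using Fin.cases with
          | zero => rfl
          | succ i => simp only [hg, Fin.cases_zero, Fin.cases_succ] at hab
                      exact absurd hab.symm (hjnot i)
      | succ i =>
          induction b using Fin.cases with
          | zero => simp only [hg, Fin.cases_zero, Fin.cases_succ] at hab
                    exact absurd hab (hjnot i)
          | succ i' => simp only [hg, Fin.cases_succ] at hab
                       exact congrArg Fin.succ (hf hab)
    refine ⟨Equiv.ofBijective g ((Finite.injective_iff_bijective).mp hginj), ?_⟩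
    funext i
    simp [hg, Equiv.ofBijective_apply, Fin.cases_succ]
  have hval : ∀ π : Equiv.Perm (Fin (m+2)),
      D (m+1) (π ∘ Fin.succ) = (A.updateCol (π 0) fun _ => 1).det := by
    intro π
    simp only [hD]
    congr 1
    funext p q
    rw [Matrix.updateCol_apply, Matrix.of_apply]
    by_cases hq : q = π 0
    · have : (univ.filter fun j : Fin (m+1) => (π ∘ Fin.succ) j = q) = ∅ := by
        refine Finset.filter_eq_empty_iff.mpr fun j _ h => ?_
        rw [hq] at h
        exact Fin.succ_ne_zero j (π.injective h)
      rw [if_pos hq, this]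
      simp
    · rcases Fin.eq_zero_or_eq_succ (π.symm q) with h0 | ⟨i, hi⟩
      · have : q = π 0 := by rw [← h0, Equiv.apply_symm_apply]
        exact absurd this hq
      · have hfi : (univ.filter fun j : Fin (m+1) => (π ∘ Fin.succ) j = q) = {i} := by
          ext j
          simp only [Finset.mem_filter, Finset.mem_univ, true_and, Finset.mem_singleton,
            Function.comp_apply]
          constructor
          · intro h
            have : π (Fin.succ j) = π (Fin.succ i) := by
              rw [h, ← Equiv.apply_symm_apply π q, hi]
            exact Fin.succ_injective _ (π.injective this)
          · rintro rfl
            rw [← hi, Equiv.apply_symm_apply]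
        rw [if_neg hq, hfi]
        simp
  have hmain : (∑ f : Fin (m+1) → Fin (m+2), D (m+1) f)
      = ((m+1)! : ℝ) * ∑ j, (A.updateCol j fun _ => 1).det := by
    have step1 : (∑ f : Fin (m+1) → Fin (m+2), D (m+1) f)
        = ∑ f ∈ univ.filter (fun f : Fin (m+1) → Fin (m+2) => Function.Injective f),
            D (m+1) f := by
      refine (Finset.sum_subset (Finset.filter_subset _ _) fun f _ hf => ?_).symm
      have hninj : ¬ Function.Injective f := by
        intro h; exact hf (Finset.mem_filter.mpr ⟨Finset.mem_univ _, h⟩)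
      rw [Function.not_injective_iff] at hninj
      obtain ⟨a, b, hab, hne⟩ := hninj
      refine hD0 _ f ?_
      have hsub : univ.image f ⊆ (univ.erase a).image f := by
        intro q hq
        obtain ⟨i, _, rfl⟩ := Finset.mem_image.mp hq
        by_cases hia : i = a
        · refine Finset.mem_image.mpr ⟨b, Finset.mem_erase.mpr ⟨Ne.symm hne, Finset.mem_univ _⟩, ?_⟩
          rw [← hab, hia]
        · exact Finset.mem_image.mpr ⟨i, Finset.mem_erase.mpr ⟨hia, Finset.mem_univ _⟩, rfl⟩
      calc (univ.image f).card ≤ ((univ.erase a).image f).card := Finset.card_le_card hsub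
        _ ≤ (univ.erase a).card := Finset.card_image_le
        _ = m := by
              rw [Finset.card_erase_of_mem (Finset.mem_univ _), Finset.card_univ,
                Fintype.card_fin]
              omega
    rw [step1]
    have step2 : (∑ π : Equiv.Perm (Fin (m+2)), (A.updateCol (π 0) fun _ => 1).det)
        = ∑ f ∈ univ.filter (fun f : Fin (m+1) → Fin (m+2) => Function.Injective f),
            D (m+1) f := by
      refine Finset.sum_bij (fun π _ => π ∘ Fin.succ) ?_ ?_ ?_ ?_
      · intro π _
        exact Finset.mem_filter.mpr ⟨Finset.mem_univ _,
          (π.injective.comp (Fin.succ_injective _))⟩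
      · intro π1 _ π2 _ h
        have h' : ⇑π1 ∘ Fin.succ = ⇑π2 ∘ Fin.succ := h
        have hagree : ∀ i : Fin (m+1), π1 i.succ = π2 i.succ := fun i => congrFun h' i
        refine Equiv.ext fun x => ?_
        rcases Fin.eq_zero_or_eq_succ x with rfl | ⟨i, rfl⟩
        · rcases Fin.eq_zero_or_eq_succ (π2.symm (π1 0)) with h0 | ⟨i, hi⟩
          · conv_rhs => rw [← h0, Equiv.apply_symm_apply]
          · have h1 : π1 0 = π2 i.succ := by rw [← hi, Equiv.apply_symm_apply]
            rw [← hagree i] at h1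
            exact absurd (π1.injective h1) (Fin.succ_ne_zero i).symm
        · exact hagree i
      · intro f hf
        obtain ⟨π, hπ⟩ := hsurj f (Finset.mem_filter.mp hf).2
        exact ⟨π, Finset.mem_univ _, hπ⟩
      · intro π _
        exact (hval π).symm
    rw [← step2]
    rw [← Equiv.sum_comp (Equiv.Perm.decomposeFin).symm
      (fun π => (A.updateCol (π 0) fun _ => 1).det), Fintype.sum_prod_type]
    simp only [Equiv.Perm.decomposeFin_symm_apply_zero, Finset.sum_const,
      Finset.card_univ, Fintype.card_perm, Fintype.card_fin, nsmul_eq_mul]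
    rw [← Finset.mul_sum]
  have hc : ∀ k : ℕ, (∑ σ : Equiv.Perm (Fin (m+2)), ε σ * ((-S σ) ^ k / k !))
      = (-1) ^ k / k ! * ∑ σ : Equiv.Perm (Fin (m+2)), ε σ * S σ ^ k := by
    intro k
    rw [Finset.mul_sum]
    refine Finset.sum_congr rfl fun σ _ => ?_
    rw [neg_pow]
    ring
  refine ⟨fun k => ∑ σ : Equiv.Perm (Fin (m+2)), ε σ * ((-S σ) ^ k / k !), ?_, ?_, ?_, ?_⟩
  · -- HasSum
    intro t
    rw [hdet]
    have h1 : ∀ σ : Equiv.Perm (Fin (m + 2)),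
        HasSum (fun k => ε σ * ((-S σ) ^ k / k !) * t ^ k) (ε σ * Real.exp (-t * S σ)) := by
      intro σ
      have := (NormedSpace.expSeries_div_hasSum_exp (-t * S σ)).mul_left (ε σ)
      rw [← Real.exp_eq_exp_ℝ] at this
      convert this using 2 with k
      case e'_5 => ring
      case e'_3 => rfl
    have := hasSum_sum (f := fun σ k => ε σ * ((-S σ) ^ k / k !) * t ^ k)
      (s := Finset.univ) (fun σ _ => h1 σ)
    convert this using 2 with k
    rw [Finset.sum_mul]
  · -- analytic
    intro t
    have : (fun t : ℝ => (Matrix.of fun i j : Fin (m + 2) => Real.exp (-t * A i j)).det)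
        = fun t => ∑ σ : Equiv.Perm (Fin (m + 2)), ε σ * Real.exp (-t * S σ) := funext hdet
    rw [this]
    exact Finset.analyticAt_fun_sum _ fun σ _ =>
      analyticAt_const.mul (((analyticAt_id.neg).mul analyticAt_const).rexp)
  · -- vanishing coefficients
    intro k hk
    have hk' : k ≤ m := by omega
    show (∑ σ : Equiv.Perm (Fin (m+2)), ε σ * ((-S σ) ^ k / k !)) = 0
    have hz : ∑ f : Fin k → Fin (m+2), D k f = 0 := by
      refine Finset.sum_eq_zero fun f _ => hD0 k f ?_
      calc (univ.image f).card ≤ (univ : Finset (Fin k)).card := Finset.card_image_le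
        _ = k := by rw [Finset.card_univ, Fintype.card_fin]
        _ ≤ m := hk'
    rw [hc k, hK k, hz, mul_zero]
  · -- top coefficient
    show (∑ σ : Equiv.Perm (Fin (m+2)), ε σ * ((-S σ) ^ (m+1) / (m+1)!))
        = (-1) ^ (m+1) * ∑ j, (A.updateCol j fun _ => 1).det
    rw [hc (m+1), hK (m+1), hmain]
    have hfact : (((m+1)! : ℕ) : ℝ) ≠ 0 := Nat.cast_ne_zero.mpr (Nat.factorial_ne_zero _)
    field_simp
end

section
/- Let X be a finite metric space with n ≥ 2 points such that the polynomial F_n(d) = Σ_{j=1}^n det(D_j) is nonzero, where D is the distance matrix and D_j is D with j-th column replaced by the all-ones vector. Then lim_{t→0+} |tX| = 1, where |tX| is the magnitude of X scaled by t (defined for all sufficiently small t > 0). -/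
open Filter Topology

section MagAux

variable {X : Type*} [Fintype X] [DecidableEq X]

private lemma magaux_det_one_add (A : Matrix X X ℝ) :
    (Matrix.of fun i k : X => 1 + A i k).det
      = A.det + ∑ j : X, (A.updateRow j fun _ => (1 : ℝ)).det := by
  classical
  have key : (Matrix.of fun i k : X => (1 : ℝ) + A i k).det
      = ∑ s : Finset X,
          Matrix.detRowAlternating (s.piecewise (fun _ => fun _ => (1 : ℝ)) fun i => A i) := by
    have h := Matrix.detRowAlternating.toMultilinearMap.map_add_univ
      (fun _ => fun _ => (1 : ℝ)) (fun i : X => A i)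
    simp at h
    exact h
  rw [key]
  have hzero : ∀ s : Finset X, 1 < s.card →
      Matrix.detRowAlternating (s.piecewise (fun _ => fun _ => (1 : ℝ)) fun i => A i) = 0 := by
    intro s hs
    obtain ⟨i, his, j, hjs, hij⟩ := Finset.one_lt_card.mp hs
    refine Matrix.detRowAlternating.map_eq_zero_of_eq _ ?_ hij
    rw [Finset.piecewise_eq_of_mem _ _ _ his, Finset.piecewise_eq_of_mem _ _ _ hjs]
  set T : Finset (Finset X) := insert ∅ (Finset.univ.image fun j : X => ({j} : Finset X))
    with hT
  have hempty : Matrix.detRowAlternating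
      ((∅ : Finset X).piecewise (fun _ => fun _ => (1 : ℝ)) fun i => A i) = A.det := by
    rw [Finset.piecewise_empty]; rfl
  have hsingle : ∀ j : X, Matrix.detRowAlternating
      (({j} : Finset X).piecewise (fun _ => fun _ => (1 : ℝ)) fun i => A i)
      = (A.updateRow j fun _ => (1 : ℝ)).det := by
    intro j; rw [Finset.piecewise_singleton]; rfl
  rw [← Finset.sum_subset (Finset.subset_univ T)]
  · rw [Finset.sum_insert (by simp),
      Finset.sum_image (fun a _ b _ h => Finset.singleton_injective h), hempty]
    exact congrArg _ (Finset.sum_congr rfl fun j _ => hsingle j)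
  · intro s _ hsT
    refine hzero s ?_
    by_contra h
    rcases Nat.le_one_iff_eq_zero_or_eq_one.mp (not_lt.mp h) with h0 | h1
    · exact hsT (by simp [hT, Finset.card_eq_zero.mp h0])
    · obtain ⟨j, rfl⟩ := Finset.card_eq_one.mp h1
      exact hsT (by simp [hT])

private lemma magaux_det_updateRow_one (A : Matrix X X ℝ) (j : X) :
    ((Matrix.of fun i k : X => 1 + A i k).updateRow j fun _ => (1 : ℝ)).det
      = (A.updateRow j fun _ => (1 : ℝ)).det := by
  classical
  have h1 : (Matrix.of fun i k : X => (1 : ℝ) + A i k).updateRow j (fun _ => 1)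
      = Matrix.of fun i k => 1 + (A.updateRow j fun _ => (0 : ℝ)) i k := by
    ext i k
    by_cases hij : i = j <;> simp [hij, Matrix.updateRow_apply]
  rw [h1, magaux_det_one_add]
  have hz : (A.updateRow j fun _ => (0 : ℝ)).det = 0 :=
    Matrix.det_eq_zero_of_row_eq_zero j (by simp)
  rw [hz, zero_add, Finset.sum_eq_single j]
  · congr 1
    ext i k
    by_cases hij : i = j <;> simp [hij, Matrix.updateRow_apply]
  · intro b _ hbj
    refine Matrix.det_eq_zero_of_row_eq_zero j fun k => ?_
    rw [Matrix.updateRow_ne fun h => hbj h.symm]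
    simp
  · intro h; exact absurd (Finset.mem_univ j) h

private lemma magaux_prod_ite (j : X) (c : ℝ) :
    (∏ i : X, if i = j then (1 : ℝ) else c) = c ^ (Fintype.card X - 1) := by
  classical
  rw [← Finset.mul_prod_erase Finset.univ _ (Finset.mem_univ j), if_pos rfl, one_mul,
    Finset.prod_congr rfl (fun i hi => if_neg (Finset.ne_of_mem_erase hi)), Finset.prod_const,
    Finset.card_erase_of_mem (Finset.mem_univ j), Finset.card_univ]

private lemma magaux_inv_sum (M : Matrix X X ℝ) :
    ∑ a : X, ∑ b : X, M⁻¹ a b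
      = (∑ j : X, (M.updateRow j fun _ => (1 : ℝ)).det) / M.det := by
  classical
  have hrow : ∀ b : X, ∑ a : X, (M.updateRow b (Pi.single a 1)).det
      = (M.updateRow b fun _ => (1 : ℝ)).det := by
    intro b
    have h := MultilinearMap.map_update_sum
      (f := Matrix.detRowAlternating.toMultilinearMap) Finset.univ b
      (fun a : X => Pi.single a (1 : ℝ)) M
    have hs : (∑ a : X, Pi.single a (1 : ℝ)) = fun _ => (1 : ℝ) := by
      ext k; simp [Finset.sum_pi_single']
    rw [hs] at h
    exact h.symm
  rw [Matrix.inv_def]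
  simp only [Matrix.smul_apply, smul_eq_mul, Ring.inverse_eq_inv]
  rw [Finset.sum_comm]
  simp only [Matrix.adjugate_apply]
  calc ∑ b : X, ∑ a : X, M.det⁻¹ * (M.updateRow b (Pi.single a 1)).det
      = M.det⁻¹ * ∑ b : X, ∑ a : X, (M.updateRow b (Pi.single a 1)).det := by
        simp_rw [Finset.mul_sum]
    _ = _ := by
        rw [Finset.sum_congr rfl fun b _ => hrow b, div_eq_inv_mul]

private lemma magaux_slope (c : ℝ) :
    Tendsto (fun t : ℝ => (Real.exp (-t * c) - 1) / t) (𝓝[>] (0 : ℝ)) (𝓝 (-c)) := by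
  have h1 : HasDerivAt (fun t : ℝ => -t * c) (-c) 0 := by
    simpa using ((hasDerivAt_id (0 : ℝ)).neg.mul_const c)
  have h : HasDerivAt (fun t : ℝ => Real.exp (-t * c)) (-c) 0 := by
    simpa using h1.exp
  have h2 := hasDerivAt_iff_tendsto_slope.mp h
  have h3 : Tendsto (slope (fun t : ℝ => Real.exp (-t * c)) 0) (𝓝[>] 0) (𝓝 (-c)) :=
    h2.mono_left (nhdsWithin_mono 0 fun x hx => ne_of_gt hx)
  refine h3.congr fun t => ?_
  simp [slope_def_field]

end MagAux

/-- If the polynomial `Fₙ(d) = Σⱼ det(Dⱼ)` is nonzero for the distance matrix `D` of a finite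
metric space `X` with `n ≥ 2` points, then `lim_{t→0+} |tX| = 1`. -/
theorem onePoint_of_Fn_ne_zero {X : Type*} [Fintype X] [DecidableEq X] [MetricSpace X]
    (hcard : 2 ≤ Fintype.card X)
    (hF : ∑ j : X, (Matrix.updateCol (Matrix.of fun a b : X => dist a b) j (fun _ => 1)).det ≠ 0) :
    Tendsto (fun t : ℝ => ∑ a : X, ∑ b : X,
        (Matrix.of fun a b : X => Real.exp (-t * dist a b))⁻¹ a b)
      (𝓝[>] (0 : ℝ)) (𝓝 1) := by
  classical
  set m : ℕ := Fintype.card X - 1 with hm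
  have hm1 : Fintype.card X = m + 1 :=
    (Nat.succ_pred_eq_of_pos (lt_of_lt_of_le Nat.zero_lt_two hcard)).symm
  set D : Matrix X X ℝ := Matrix.of fun a b : X => dist a b with hD
  set Q : ℝ → Matrix X X ℝ :=
    fun t => Matrix.of fun a b : X => (Real.exp (-t * dist a b) - 1) / t with hQ
  set Qi : Matrix X X ℝ := Matrix.of fun a b : X => -dist a b with hQi
  set S : ℝ → ℝ := fun t => ∑ j : X, ((Q t).updateRow j fun _ => (1 : ℝ)).det with hS
  set L : ℝ := (-1 : ℝ) ^ m * ∑ j : X, (D.updateCol j fun _ => (1 : ℝ)).det with hL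
  have hLne : L ≠ 0 := mul_ne_zero (pow_ne_zero _ (by norm_num)) hF
  -- limit of Q entrywise
  have hQlim : Tendsto Q (𝓝[>] (0 : ℝ)) (𝓝 Qi) := by
    apply tendsto_pi_nhds.mpr
    intro a
    apply tendsto_pi_nhds.mpr
    intro b
    exact magaux_slope (dist a b)
  -- limit of each summand of S
  have hSrow : ∀ j : X, Tendsto (fun t => ((Q t).updateRow j fun _ => (1 : ℝ)).det)
      (𝓝[>] (0 : ℝ)) (𝓝 ((Qi.updateRow j fun _ => (1 : ℝ)).det)) := by
    intro j
    have hc : Continuous fun A : Matrix X X ℝ => (A.updateRow j fun _ => (1 : ℝ)).det :=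
      (continuous_id.matrix_updateRow j continuous_const).matrix_det
    exact (hc.tendsto Qi).comp hQlim
  have hsign : ∀ j : X, (Qi.updateRow j fun _ => (1 : ℝ)).det
      = (-1 : ℝ) ^ m * (D.updateCol j fun _ => (1 : ℝ)).det := by
    intro j
    have h1 : Qi.updateRow j (fun _ => (1 : ℝ))
        = Matrix.of fun i k =>
            (if i = j then (1 : ℝ) else -1) * (D.updateCol j fun _ => (1 : ℝ)).transpose i k := by
      ext i k
      by_cases hij : i = j <;>
        simp [hij, Matrix.updateRow_apply, Matrix.updateCol_apply, hQi, hD,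
          Matrix.transpose_apply, dist_comm]
    rw [h1, Matrix.det_mul_column, magaux_prod_ite, Matrix.det_transpose]
  have hSlim : Tendsto S (𝓝[>] (0 : ℝ)) (𝓝 L) := by
    have h := tendsto_finset_sum (Finset.univ : Finset X)
      fun j (_ : j ∈ Finset.univ) => hSrow j
    have he : (∑ j : X, (Qi.updateRow j fun _ => (1 : ℝ)).det) = L := by
      rw [hL, Finset.mul_sum]
      exact Finset.sum_congr rfl fun j _ => hsign j
    rw [hS, ← he]
    exact h
  have htid : Tendsto (fun t : ℝ => t) (𝓝[>] (0 : ℝ)) (𝓝 0) :=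
    tendsto_id.mono_left nhdsWithin_le_nhds
  have hQdlim : Tendsto (fun t => (Q t).det) (𝓝[>] (0 : ℝ)) (𝓝 Qi.det) :=
    ((continuous_id.matrix_det).tendsto Qi).comp hQlim
  have hden : Tendsto (fun t => t * (Q t).det + S t) (𝓝[>] (0 : ℝ)) (𝓝 L) := by
    have h := (htid.mul hQdlim).add hSlim
    simpa using h
  have hratio : Tendsto (fun t => S t / (t * (Q t).det + S t)) (𝓝[>] (0 : ℝ)) (𝓝 1) := by
    have h := hSlim.div hden hLne
    simpa [div_self hLne, Pi.div_def] using h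
  refine Tendsto.congr' ?_ hratio
  filter_upwards [hden.eventually_ne hLne, self_mem_nhdsWithin] with t hdne ht
  have htne : (t : ℝ) ≠ 0 := ne_of_gt ht
  have hMN : (Matrix.of fun a b : X => Real.exp (-t * dist a b))
      = Matrix.of fun i k =>
          1 + (Matrix.of fun a b : X => Real.exp (-t * dist a b) - 1) i k := by
    ext i k; simp
  have hNrow : ∀ j : X, ((Matrix.of fun a b : X => Real.exp (-t * dist a b) - 1).updateRow j
      fun _ => (1 : ℝ)).det = t ^ m * ((Q t).updateRow j fun _ => (1 : ℝ)).det := by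
    intro j
    have h2 : ((Matrix.of fun a b : X => Real.exp (-t * dist a b) - 1).updateRow j
        fun _ => (1 : ℝ))
        = Matrix.of fun i k =>
            (if i = j then (1 : ℝ) else t) * ((Q t).updateRow j fun _ => (1 : ℝ)) i k := by
      ext i k
      by_cases hij : i = j
      · simp [hij, Matrix.updateRow_apply]
      · simp only [hij, Matrix.updateRow_apply, if_false, Matrix.of_apply, hQ]
        field_simp
    rw [h2, Matrix.det_mul_column, magaux_prod_ite]
  have hdN : (Matrix.of fun a b : X => Real.exp (-t * dist a b) - 1).det
      = t ^ Fintype.card X * (Q t).det := by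
    have hNQ : (Matrix.of fun a b : X => Real.exp (-t * dist a b) - 1)
        = Matrix.of fun i k : X => t * (Q t) i k := by
      ext i k
      simp only [Matrix.of_apply, hQ]
      field_simp
    rw [hNQ, Matrix.det_mul_column (fun _ => t), Finset.prod_const, Finset.card_univ]
  have hnum : ∀ j : X, ((Matrix.of fun a b : X => Real.exp (-t * dist a b)).updateRow j
      fun _ => (1 : ℝ)).det = t ^ m * ((Q t).updateRow j fun _ => (1 : ℝ)).det := by
    intro j
    rw [hMN, magaux_det_updateRow_one, hNrow]
  have hdet : (Matrix.of fun a b : X => Real.exp (-t * dist a b)).det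
      = t ^ m * (t * (Q t).det + S t) := by
    have hSt : S t = ∑ j : X, ((Q t).updateRow j fun _ => (1 : ℝ)).det := rfl
    rw [hMN, magaux_det_one_add, hdN, Finset.sum_congr rfl fun j _ => hNrow j,
      ← Finset.mul_sum, hSt, hm1, pow_succ]
    ring
  rw [magaux_inv_sum, hdet, Finset.sum_congr rfl fun j _ => hnum j, ← Finset.mul_sum,
    mul_div_mul_left _ _ (pow_ne_zero m htne)]
end

section
/- Let X and Y be finite nonempty homogeneous metric spaces of diameter at most 2, and let X*Y be their join (distances within X and Y unchanged, all cross-distances equal to 1). Then the formal magnitude satisfies Mag(X*Y)(q) = (N_X(q) + N_Y(q) − 2q) / (N_X(q)·N_Y(q) − q²), where N_X(q) = (1/#X)·Σ_{x'∈X} q^{d(x,x')} for any fixed x ∈ X. -/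
/-- `N_X(q) = (1/#X)·Σ_{x'} q^{d(x,x')}` for a basepoint `x`. -/
noncomputable def Nfun {X : Type*} [Fintype X] [MetricSpace X] (x : X) (q : ℝ) : ℝ :=
  (1 / (Fintype.card X : ℝ)) * ∑ x' : X, q ^ dist x x'

/-- The similarity matrix of the join `X * Y` (cross-distances `1`). -/
noncomputable def joinSim {X Y : Type*} [MetricSpace X] [MetricSpace Y] (q : ℝ) :
    Matrix (X ⊕ Y) (X ⊕ Y) ℝ :=
  Matrix.of fun a b =>
    match a, b with
    | Sum.inl x, Sum.inl x' => q ^ dist x x'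
    | Sum.inr y, Sum.inr y' => q ^ dist y y'
    | _, _ => q

lemma sum_pow_dist_const {X : Type*} [Fintype X] [MetricSpace X]
    (h : ∀ a b : X, ∃ e : X ≃ᵢ X, e a = b) (x x0 : X) (q : ℝ) :
    ∑ x' : X, q ^ dist x x' = ∑ x' : X, q ^ dist x0 x' := by
  obtain ⟨e, he⟩ := h x0 x
  rw [← he, ← Equiv.sum_comp e.toEquiv (fun x' => q ^ dist (e x0) x')]
  simp [e.isometry.dist_eq]

/-- Magnitude of a join of homogeneous spaces of diameter at most 2:
`Mag(X*Y)(q) = (N_X(q) + N_Y(q) − 2q)/(N_X(q)N_Y(q) − q²)`. -/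
theorem mag_join_homogeneous {X Y : Type*} [Fintype X] [Fintype Y] [DecidableEq X]
    [DecidableEq Y] [MetricSpace X] [MetricSpace Y] [Nonempty X] [Nonempty Y]
    (hX : ∀ a b : X, ∃ e : X ≃ᵢ X, e a = b) (hY : ∀ a b : Y, ∃ e : Y ≃ᵢ Y, e a = b)
    (hdX : ∀ a b : X, dist a b ≤ 2) (hdY : ∀ a b : Y, dist a b ≤ 2)
    (x0 : X) (y0 : Y) (q : ℝ) (hq : 0 < q)
    (hden : Nfun x0 q * Nfun y0 q - q ^ 2 ≠ 0)
    (hinv : IsUnit (joinSim (X := X) (Y := Y) q).det) :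
    ∑ a, ∑ b, (joinSim (X := X) (Y := Y) q)⁻¹ a b =
      (Nfun x0 q + Nfun y0 q - 2 * q) / (Nfun x0 q * Nfun y0 q - q ^ 2) := by
  set n : ℝ := (Fintype.card X : ℝ) with hn
  set m : ℝ := (Fintype.card Y : ℝ) with hm
  have hn0 : n ≠ 0 := Nat.cast_ne_zero.2 Fintype.card_ne_zero
  have hm0 : m ≠ 0 := Nat.cast_ne_zero.2 Fintype.card_ne_zero
  set NX : ℝ := Nfun x0 q with hNX
  set NY : ℝ := Nfun y0 q with hNY
  have hsX : ∀ x : X, ∑ x' : X, q ^ dist x x' = n * NX := by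
    intro x
    rw [sum_pow_dist_const hX x x0, hNX, Nfun]
    field_simp
    exact hn.symm
  have hsY : ∀ y : Y, ∑ y' : Y, q ^ dist y y' = m * NY := by
    intro y
    rw [sum_pow_dist_const hY y y0, hNY, Nfun]
    field_simp
    exact hm.symm
  set D : ℝ := NX * NY - q ^ 2 with hD
  set α : ℝ := (NY - q) / (n * D) with hα
  set β : ℝ := (NX - q) / (m * D) with hβ
  set w : X ⊕ Y → ℝ := Sum.elim (fun _ => α) (fun _ => β) with hw
  have hZw : (joinSim (X := X) (Y := Y) q).mulVec w = fun _ => 1 := by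
    funext a
    cases a with
    | inl x =>
      simp only [Matrix.mulVec, dotProduct]
      rw [Fintype.sum_sum_type]
      simp only [joinSim, Matrix.of_apply, hw, Sum.elim_inl, Sum.elim_inr]
      rw [← Finset.sum_mul, hsX x]
      simp only [Finset.sum_const, Finset.card_univ, nsmul_eq_mul, ← hm]
      rw [hα, hβ]
      field_simp
      ring
    | inr y =>
      simp only [Matrix.mulVec, dotProduct]
      rw [Fintype.sum_sum_type]
      simp only [joinSim, Matrix.of_apply, hw, Sum.elim_inl, Sum.elim_inr]
      rw [← Finset.sum_mul, ← Finset.sum_mul, hsY y]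
      simp only [Finset.sum_const, Finset.card_univ, nsmul_eq_mul, ← hn]
      rw [hα, hβ]
      field_simp
      ring
  have hwinv : (joinSim (X := X) (Y := Y) q)⁻¹.mulVec (fun _ => 1) = w := by
    rw [← hZw, Matrix.mulVec_mulVec, Matrix.nonsing_inv_mul _ hinv, Matrix.one_mulVec]
  have hLHS : ∑ a, ∑ b, (joinSim (X := X) (Y := Y) q)⁻¹ a b
      = ∑ a, (joinSim (X := X) (Y := Y) q)⁻¹.mulVec (fun _ => 1) a := by
    simp [Matrix.mulVec, dotProduct]
  rw [hLHS, hwinv, hw]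
  rw [Fintype.sum_sum_type]
  simp only [Sum.elim_inl, Sum.elim_inr, Finset.sum_const, Finset.card_univ, nsmul_eq_mul]
  rw [hα, hβ]
  field_simp
  ring
end

section
/- Let F be the tree (in particular any finite tree) with E edges. Then for real q ∈ (0,1), the magnitude of F with shortest-path metric and similarity matrix (q^{d(u,v)}) equals 1 + E·(1−q)/(1+q), and hence lim_{t→0+}|tF| = 1. -/
open Filter Topology

open SimpleGraph

private lemma path_length_eq_dist {V : Type*} {G : SimpleGraph V} (hconn : G.Connected)
    (hacyc : G.IsAcyclic) {u v : V} (p : G.Walk u v) (hp : p.IsPath) :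
    p.length = G.dist u v := by
  obtain ⟨q, hq⟩ := hconn.exists_walk_length_eq_dist u v
  have hqp : q.IsPath := q.isPath_of_length_eq_dist hq
  have h := hacyc.path_unique ⟨p, hp⟩ ⟨q, hqp⟩
  rw [show p = q from congrArg Subtype.val h, hq]

private lemma exists_closer {V : Type*} {G : SimpleGraph V} (hconn : G.Connected)
    (hacyc : G.IsAcyclic) {u w : V} (hne : u ≠ w) :
    ∃ v₀, G.Adj w v₀ ∧ G.dist u v₀ + 1 = G.dist u w ∧
      ∀ v, G.Adj w v → v ≠ v₀ → G.dist u v = G.dist u w + 1 := by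
  classical
  obtain ⟨p, hpl⟩ := hconn.exists_walk_length_eq_dist w u
  have hp : p.IsPath := p.isPath_of_length_eq_dist hpl
  cases p with
  | nil => exact absurd rfl hne.symm
  | @cons _ v₀ _ h q =>
    have hq : q.IsPath := hp.of_cons
    have hwq : w ∉ q.support := ((Walk.cons_isPath_iff h q).mp hp).2
    have hqd : q.length = G.dist v₀ u := path_length_eq_dist hconn hacyc q hq
    have hd0 : G.dist u v₀ + 1 = G.dist u w := by
      rw [dist_comm (G := G) (u := u) (v := v₀), ← hqd, dist_comm (G := G) (u := u) (v := w), ← hpl]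
      simp [Walk.length_cons, add_comm]
    refine ⟨v₀, h, hd0, fun v hv hvne => ?_⟩
    obtain ⟨r, hrl⟩ := hconn.exists_walk_length_eq_dist v u
    have hr : r.IsPath := r.isPath_of_length_eq_dist hrl
    by_cases hw : w ∈ r.support
    · have ht1 : (r.takeUntil w hw).IsPath := hr.takeUntil hw
      have ht2 : (r.dropUntil w hw).IsPath := hr.dropUntil hw
      have hl1 : (r.takeUntil w hw).length = G.dist v w :=
        path_length_eq_dist hconn hacyc _ ht1
      have hl2 : (r.dropUntil w hw).length = G.dist w u :=
        path_length_eq_dist hconn hacyc _ ht2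
      have hadd : (r.takeUntil w hw).length + (r.dropUntil w hw).length = r.length := by
        rw [← Walk.length_append, Walk.take_spec]
      have hvw : G.dist v w = 1 := dist_eq_one_iff_adj.mpr hv.symm
      rw [dist_comm (G := G) (u := u) (v := v), ← hrl, ← hadd, hl1, hl2, hvw, dist_comm (G := G) (u := w) (v := u), dist_comm (G := G) (u := u) (v := w)]
      omega
    · -- cons hv r is a path from w to u; by uniqueness equals cons h q, so v = v₀
      have hcons : (Walk.cons hv r).IsPath := hr.cons hw
      have := hacyc.path_unique ⟨Walk.cons hv r, hcons⟩ ⟨Walk.cons h q, hp⟩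
      have hsup := congrArg Walk.support (congrArg Subtype.val this)
      rw [Walk.support_cons, Walk.support_cons, r.support_eq_cons, q.support_eq_cons] at hsup
      exact absurd (List.cons.inj (List.cons.inj hsup).2).1 hvne

private lemma tree_inv {V : Type*} [Fintype V] [DecidableEq V] (G : SimpleGraph V)
    [DecidableRel G.Adj] (hconn : G.Connected) (hacyc : G.IsAcyclic) {q : ℝ}
    (hq : q ∈ Set.Ioo (0:ℝ) 1) :
    (Matrix.of fun u v : V => q ^ G.dist u v)⁻¹ =
      Matrix.of fun u v : V => (if u = v then 1 + ((G.degree v : ℝ) - 1) * q ^ 2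
        else if G.Adj u v then -q else 0) / (1 - q ^ 2) := by
  have hc : (1 : ℝ) - q ^ 2 ≠ 0 := by nlinarith [hq.1, hq.2]
  apply Matrix.inv_eq_right_inv
  ext u w
  rw [Matrix.mul_apply, Matrix.one_apply]
  simp only [Matrix.of_apply]
  have hstep : ∀ v : V, q ^ G.dist u v *
      ((if v = w then 1 + ((G.degree w : ℝ) - 1) * q ^ 2 else if G.Adj v w then -q else 0)
        / (1 - q ^ 2)) =
      ((if v = w then q ^ G.dist u w * (1 + ((G.degree w : ℝ) - 1) * q ^ 2) else 0) +
       (if v ∈ G.neighborFinset w then q ^ G.dist u v * (-q) else 0)) / (1 - q ^ 2) := by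
    intro v
    by_cases hvw : v = w
    · subst hvw
      simp [G.irrefl]
      ring
    · by_cases hadj : G.Adj v w
      · simp [hvw, hadj, mem_neighborFinset, hadj.symm]
        ring
      · have : v ∉ G.neighborFinset w := by
          simp [mem_neighborFinset]; exact fun h => hadj h.symm
        simp [hvw, hadj, this]
  rw [Finset.sum_congr rfl (fun v _ => hstep v), ← Finset.sum_div,
    Finset.sum_add_distrib, Finset.sum_ite_eq' Finset.univ w, Finset.sum_ite_mem,
    Finset.univ_inter]
  simp only [Finset.mem_univ, if_true]
  by_cases hne : u = w
  · subst hne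
    have hterm : ∀ v ∈ G.neighborFinset u, q ^ G.dist u v * (-q) = -(q * q) := by
      intro v hv
      rw [mem_neighborFinset] at hv
      rw [show G.dist u v = 1 from dist_eq_one_iff_adj.mpr hv]
      ring
    rw [Finset.sum_congr rfl hterm, Finset.sum_const, card_neighborFinset_eq_degree,
      dist_self]
    simp only [if_pos rfl]
    rw [nsmul_eq_mul]
    field_simp
    simp only [if_true, ↓reduceIte]
    ring
  · obtain ⟨v₀, hv₀adj, hd0, hfar⟩ := exists_closer hconn hacyc hne
    have hv₀mem : v₀ ∈ G.neighborFinset w := (mem_neighborFinset _ _ _).mpr hv₀adj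
    rw [← Finset.add_sum_erase _ _ hv₀mem]
    have hterm : ∀ v ∈ (G.neighborFinset w).erase v₀,
        q ^ G.dist u v * (-q) = q ^ (G.dist u w + 1) * (-q) := by
      intro v hv
      rw [Finset.mem_erase, mem_neighborFinset] at hv
      rw [hfar v hv.2 hv.1]
    rw [Finset.sum_congr rfl hterm, Finset.sum_const, Finset.card_erase_of_mem hv₀mem,
      card_neighborFinset_eq_degree, nsmul_eq_mul]
    have hdeg : 1 ≤ G.degree w := by
      rw [← card_neighborFinset_eq_degree]
      exact Finset.card_pos.mpr ⟨v₀, hv₀mem⟩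
    have hcast : ((G.degree w - 1 : ℕ) : ℝ) = (G.degree w : ℝ) - 1 := by
      push_cast [Nat.cast_sub hdeg]; ring
    rw [hcast, if_neg hne]
    have ha : q ^ G.dist u w = q ^ G.dist u v₀ * q := by rw [← pow_succ, hd0]
    have hb : q ^ (G.dist u w + 1) = q ^ G.dist u v₀ * q * q := by rw [pow_succ, ha]
    rw [ha, hb]
    field_simp
    ring

private lemma mag_formula {V : Type*} [Fintype V] [DecidableEq V] (G : SimpleGraph V)
    [DecidableRel G.Adj] (hconn : G.Connected) (hacyc : G.IsAcyclic) {q : ℝ}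
    (hq : q ∈ Set.Ioo (0:ℝ) 1) :
    ∑ u, ∑ v, (Matrix.of fun u v : V => q ^ G.dist u v)⁻¹ u v =
      1 + (G.edgeFinset.card : ℝ) * (1 - q) / (1 + q) := by
  have h1q : (1:ℝ) + q ≠ 0 := by nlinarith [hq.1]
  have h2q : (1:ℝ) - q ≠ 0 := by nlinarith [hq.2]
  have hc : (1 : ℝ) - q ^ 2 ≠ 0 := by nlinarith [hq.1, hq.2]
  rw [tree_inv G hconn hacyc hq]
  simp only [Matrix.of_apply]
  have hstep : ∀ u v : V,
      (if u = v then 1 + ((G.degree v : ℝ) - 1) * q ^ 2 else if G.Adj u v then -q else 0)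
        / (1 - q ^ 2) =
      ((if v = u then 1 + ((G.degree u : ℝ) - 1) * q ^ 2 else 0) +
       (if v ∈ G.neighborFinset u then -q else 0)) / (1 - q ^ 2) := by
    intro u v
    by_cases hvw : u = v
    · subst hvw; simp [G.irrefl]
    · by_cases hadj : G.Adj u v
      · simp [hvw, Ne.symm hvw, hadj, mem_neighborFinset]
      · have : v ∉ G.neighborFinset u := by simp [mem_neighborFinset, hadj]
        simp [hvw, Ne.symm hvw, hadj, this]
  have hrow : ∀ u : V, ∑ v, (if u = v then 1 + ((G.degree v : ℝ) - 1) * q ^ 2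
      else if G.Adj u v then -q else 0) / (1 - q ^ 2) =
      ((1 - q ^ 2) + (q ^ 2 - q) * (G.degree u : ℝ)) / (1 - q ^ 2) := by
    intro u
    rw [Finset.sum_congr rfl (fun v _ => hstep u v), ← Finset.sum_div,
      Finset.sum_add_distrib, Finset.sum_ite_eq' Finset.univ u, Finset.sum_ite_mem,
      Finset.univ_inter, Finset.sum_const, card_neighborFinset_eq_degree, nsmul_eq_mul]
    simp only [Finset.mem_univ, if_true]
    congr 1
    ring
  rw [Finset.sum_congr rfl (fun u _ => hrow u), ← Finset.sum_div,
    Finset.sum_add_distrib, Finset.sum_const, ← Finset.mul_sum]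
  have hdegsum : ∑ u : V, (G.degree u : ℝ) = 2 * (G.edgeFinset.card : ℝ) := by
    rw [← Nat.cast_sum, G.sum_degrees_eq_twice_card_edges]; push_cast; ring
  have hN : (Fintype.card V : ℝ) = (G.edgeFinset.card : ℝ) + 1 := by
    have := (SimpleGraph.IsTree.mk hconn hacyc).card_edgeFinset
    rw [← this]; push_cast; ring
  rw [hdegsum, Finset.card_univ, nsmul_eq_mul, hN]
  field_simp
  ring

/-- For a finite tree `F` with `E` edges and shortest-path metric, for `q ∈ (0,1)` the
magnitude equals `1 + E·(1−q)/(1+q)`; hence `lim_{t→0+}|tF| = 1`. -/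
theorem mag_tree {V : Type*} [Fintype V] [DecidableEq V] (G : SimpleGraph V)
    [DecidableRel G.Adj] (hconn : G.Connected) (hacyc : G.IsAcyclic) :
    (∀ q ∈ Set.Ioo (0 : ℝ) 1,
      ∑ u, ∑ v, (Matrix.of fun u v : V => q ^ G.dist u v)⁻¹ u v =
        1 + (G.edgeFinset.card : ℝ) * (1 - q) / (1 + q)) ∧
    Tendsto (fun t : ℝ => ∑ u, ∑ v,
        (Matrix.of fun u v : V => Real.exp (-t * G.dist u v))⁻¹ u v)
      (𝓝[>] (0 : ℝ)) (𝓝 1) := by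
  refine ⟨fun q hq => mag_formula G hconn hacyc hq, ?_⟩
  have heq : (fun t : ℝ => ∑ u, ∑ v,
      (Matrix.of fun u v : V => Real.exp (-t * G.dist u v))⁻¹ u v) =ᶠ[𝓝[>] (0:ℝ)]
      fun t => 1 + (G.edgeFinset.card : ℝ) * (1 - Real.exp (-t)) / (1 + Real.exp (-t)) := by
    filter_upwards [self_mem_nhdsWithin] with t ht
    have hq : Real.exp (-t) ∈ Set.Ioo (0:ℝ) 1 :=
      ⟨Real.exp_pos _, Real.exp_lt_one_iff.mpr (by simpa using ht)⟩
    have hm : (Matrix.of fun u v : V => Real.exp (-t * G.dist u v)) =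
        Matrix.of fun u v : V => (Real.exp (-t)) ^ G.dist u v := by
      ext u v
      simp only [Matrix.of_apply]
      rw [mul_comm (-t) ((G.dist u v : ℝ)), Real.exp_nat_mul]
    rw [hm, mag_formula G hconn hacyc hq]
  refine Tendsto.congr' heq.symm ?_
  have hexp : Tendsto (fun t : ℝ => Real.exp (-t)) (𝓝 0) (𝓝 1) := by
    have h := (Real.continuous_exp.comp continuous_neg).tendsto 0
    simpa [Function.comp_def] using h
  have hnum : Tendsto (fun t : ℝ => (G.edgeFinset.card : ℝ) * (1 - Real.exp (-t))) (𝓝 0)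
      (𝓝 ((G.edgeFinset.card : ℝ) * (1 - 1))) := tendsto_const_nhds.mul (tendsto_const_nhds.sub hexp)
  have hden : Tendsto (fun t : ℝ => 1 + Real.exp (-t)) (𝓝 0) (𝓝 (1 + 1)) :=
    tendsto_const_nhds.add hexp
  have hall : Tendsto (fun t : ℝ => 1 + (G.edgeFinset.card : ℝ) * (1 - Real.exp (-t)) /
      (1 + Real.exp (-t))) (𝓝 0) (𝓝 (1 + (G.edgeFinset.card : ℝ) * (1 - 1) / (1 + 1))) :=
    tendsto_const_nhds.add (hnum.div hden (by norm_num))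
  have : Tendsto (fun t : ℝ => 1 + (G.edgeFinset.card : ℝ) * (1 - Real.exp (-t)) /
      (1 + Real.exp (-t))) (𝓝 0) (𝓝 1) := by simpa using hall
  exact this.mono_left nhdsWithin_le_nhds
end

section
/- Let X be a finite homogeneous metric space with n points and let N_X(q) = (1/n)·Σ_{x'∈X} q^{d(x,x')}. Then for real q > 0 with N_X(q) ≠ 0, the magnitude of X with similarity matrix (q^{d(x,y)}) equals 1/N_X(q). -/
/-- Speyer's formula: the magnitude of a finite homogeneous metric space equals `1/N_X(q)`. -/
theorem speyer_formula {X : Type*} [Fintype X] [DecidableEq X] [MetricSpace X] [Nonempty X]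
    (hX : ∀ a b : X, ∃ e : X ≃ᵢ X, e a = b)
    (x0 : X) (q : ℝ) (hq : 0 < q) (hN : Nfun x0 q ≠ 0)
    (hinv : IsUnit (Matrix.of fun a b : X => q ^ dist a b).det) :
    ∑ a, ∑ b, (Matrix.of fun a b : X => q ^ dist a b)⁻¹ a b = 1 / Nfun x0 q := by
  set Z : Matrix X X ℝ := Matrix.of fun a b : X => q ^ dist a b with hZ
  set S : ℝ := ∑ b, Z x0 b with hS
  have hrow : ∀ a : X, ∑ b, Z a b = S := by
    intro a
    obtain ⟨e, he⟩ := hX x0 a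
    calc ∑ b, Z a b = ∑ b, Z (e x0) (e b) := by
          rw [he]
          exact (Equiv.sum_comp e.toEquiv (fun b => Z a b)).symm
      _ = S := by
          simp only [hZ, Matrix.of_apply, e.isometry.dist_eq, hS]
  have hScard : S = (Fintype.card X : ℝ) * Nfun x0 q := by
    have hc : (Fintype.card X : ℝ) ≠ 0 := Nat.cast_ne_zero.mpr Fintype.card_ne_zero
    simp only [Nfun, hS, hZ, Matrix.of_apply]
    field_simp
  have hc : (Fintype.card X : ℝ) ≠ 0 := Nat.cast_ne_zero.mpr Fintype.card_ne_zero
  have hS0 : S ≠ 0 := by rw [hScard]; exact mul_ne_zero hc hN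
  have huv : Z.mulVec (fun _ => 1) = S • (fun _ => 1 : X → ℝ) := by
    funext a
    simp [Matrix.mulVec, dotProduct, hrow a]
  have hinvvec : Z⁻¹.mulVec (fun _ => 1) = S⁻¹ • (fun _ => 1 : X → ℝ) := by
    have h1 : Z⁻¹.mulVec (Z.mulVec (fun _ => 1)) = (fun _ => 1 : X → ℝ) := by
      rw [Matrix.mulVec_mulVec, Matrix.nonsing_inv_mul Z hinv, Matrix.one_mulVec]
    rw [huv, Matrix.mulVec_smul] at h1
    funext a
    have h2 := congrFun h1 a
    simp only [Pi.smul_apply, smul_eq_mul] at h2 ⊢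
    rw [inv_mul_eq_div, eq_div_iff hS0, mul_comm]
    exact h2
  have hsum : ∀ a : X, ∑ b, Z⁻¹ a b = S⁻¹ := by
    intro a
    have := congrFun hinvvec a
    simpa [Matrix.mulVec, dotProduct] using this
  calc ∑ a, ∑ b, Z⁻¹ a b = ∑ a : X, S⁻¹ := by simp [hsum]
    _ = (Fintype.card X : ℝ) * S⁻¹ := by simp [Finset.sum_const, mul_comm]
    _ = 1 / Nfun x0 q := by rw [hScard]; field_simp
end

section
/- Every metric space with at most 4 points embeds isometrically into (ℝ², ℓ¹-metric), and hence (by Leinster–Meckes) has the one-point property; in particular, any 5-point space without the one-point property is of minimal cardinality. -/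
open Filter Topology Matrix Kronecker

noncomputable section
namespace FourPtAux

def E4 (u v w : ℝ) : Matrix (Fin 4) (Fin 4) ℝ :=
  !![1, u, u*v, u*v*w; u, 1, v, v*w; u*v, v, 1, w; u*v*w, v*w, w, 1]

def G4 (u v w : ℝ) : Matrix (Fin 4) (Fin 4) ℝ :=
  !![1, u, u*v, u*v*w;
     0, Real.sqrt (1-u^2), Real.sqrt (1-u^2)*v, Real.sqrt (1-u^2)*v*w;
     0, 0, Real.sqrt (1-v^2), Real.sqrt (1-v^2)*w;
     0, 0, 0, Real.sqrt (1-w^2)]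

def T4 (u v w : ℝ) : Matrix (Fin 4) (Fin 4) ℝ :=
  !![1/(1-u^2), -u/(1-u^2), 0, 0;
     -u/(1-u^2), 1/(1-u^2)+1/(1-v^2)-1, -v/(1-v^2), 0;
     0, -v/(1-v^2), 1/(1-v^2)+1/(1-w^2)-1, -w/(1-w^2);
     0, 0, -w/(1-w^2), 1/(1-w^2)]

def Sline (g1 g2 g3 t : ℝ) : ℝ :=
  1 + (1 - Real.exp (-(t*g1)))/(1 + Real.exp (-(t*g1)))
    + (1 - Real.exp (-(t*g2)))/(1 + Real.exp (-(t*g2)))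
    + (1 - Real.exp (-(t*g3)))/(1 + Real.exp (-(t*g3)))

variable {u v w : ℝ}

lemma E4_mul_T4 (hu : u^2 ≠ 1) (hv : v^2 ≠ 1) (hw : w^2 ≠ 1) :
    E4 u v w * T4 u v w = 1 := by
  have h1 : (1:ℝ) - u^2 ≠ 0 := sub_ne_zero.mpr (Ne.symm hu)
  have h2 : (1:ℝ) - v^2 ≠ 0 := sub_ne_zero.mpr (Ne.symm hv)
  have h3 : (1:ℝ) - w^2 ≠ 0 := sub_ne_zero.mpr (Ne.symm hw)
  ext i j
  fin_cases i <;> fin_cases j <;>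
    simp [E4, T4, Matrix.mul_apply, Fin.sum_univ_four, Matrix.one_apply, Matrix.vecHead, Matrix.vecTail] <;>
    field_simp <;> ring

lemma G4_factor (hu : u^2 ≤ 1) (hv : v^2 ≤ 1) (hw : w^2 ≤ 1) :
    (G4 u v w)ᵀ * G4 u v w = E4 u v w := by
  have h1 : Real.sqrt (1-u^2) ^ 2 = 1 - u^2 := Real.sq_sqrt (by linarith)
  have h2 : Real.sqrt (1-v^2) ^ 2 = 1 - v^2 := Real.sq_sqrt (by linarith)
  have h3 : Real.sqrt (1-w^2) ^ 2 = 1 - w^2 := Real.sq_sqrt (by linarith)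
  ext i j
  fin_cases i <;> fin_cases j <;>
    simp [E4, G4, Matrix.mul_apply, Fin.sum_univ_four, Matrix.vecHead, Matrix.vecTail] <;>
    first
      | ring1
      | linear_combination v*h1
      | linear_combination v*w*h1
      | linear_combination v^2*w*h1 + w*h2
      | linear_combination v^2*w^2*h1 + w^2*h2 + h3
      | linear_combination v^2*h1 + h2
      | linear_combination w*h2
      | linear_combination h1
      | linear_combination h2
      | linear_combination h3

lemma E4_transpose : (E4 u v w)ᵀ = E4 u v w := by
  ext i j
  fin_cases i <;> fin_cases j <;> simp [E4, Matrix.vecHead, Matrix.vecTail]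

lemma T4_transpose : (T4 u v w)ᵀ = T4 u v w := by
  ext i j
  fin_cases i <;> fin_cases j <;> simp [T4, Matrix.vecHead, Matrix.vecTail]

lemma T4_sum (hu0 : 0 < u) (hu : u < 1) (hv0 : 0 < v) (hv : v < 1)
    (hw0 : 0 < w) (hw : w < 1) :
    ∑ i, ∑ j, T4 u v w i j =
      1 + (1-u)/(1+u) + (1-v)/(1+v) + (1-w)/(1+w) := by
  have h1 : (1:ℝ) - u^2 ≠ 0 := by nlinarith
  have h2 : (1:ℝ) - v^2 ≠ 0 := by nlinarith
  have h3 : (1:ℝ) - w^2 ≠ 0 := by nlinarith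
  have h1' : (1:ℝ) + u ≠ 0 := by linarith
  have h2' : (1:ℝ) + v ≠ 0 := by linarith
  have h3' : (1:ℝ) + w ≠ 0 := by linarith
  simp [T4, Fin.sum_univ_four, Matrix.vecHead, Matrix.vecTail]
  field_simp
  ring

lemma fin4_all {P : Fin 4 → Prop} (h0 : P 0) (h1 : P 1) (h2 : P 2) (h3 : P 3) :
    ∀ k, P k := by
  intro k
  fin_cases k
  exacts [h0, h1, h2, h3]

lemma E4_diag (u v w : ℝ) : ∀ k, E4 u v w k k = 1 := by
  refine fin4_all ?_ ?_ ?_ ?_ <;> simp [E4, Matrix.vecHead, Matrix.vecTail]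

lemma E4_exp (t : ℝ) (c : Fin 4 → ℝ) (hc : StrictMono c) :
    ∀ k l : Fin 4,
      E4 (Real.exp (-(t*(c 1 - c 0)))) (Real.exp (-(t*(c 2 - c 1)))) (Real.exp (-(t*(c 3 - c 2)))) k l
        = Real.exp (-t * |c k - c l|) := by
  have h01 : c 0 < c 1 := hc (by decide)
  have h12 : c 1 < c 2 := hc (by decide)
  have h23 : c 2 < c 3 := hc (by decide)
  refine fin4_all ?_ ?_ ?_ ?_ <;> refine fin4_all ?_ ?_ ?_ ?_ <;>
    simp [E4, Matrix.vecHead, Matrix.vecTail] <;>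
    first
      | exact Or.inl trivial
      | (rw [abs_of_nonneg (by linarith)]; simp only [← Real.exp_add]; rw [Real.exp_eq_exp]; ring)
      | (rw [abs_of_nonpos (by linarith), neg_sub]; simp only [← Real.exp_add]; rw [Real.exp_eq_exp]; ring)
      | (left; rw [abs_of_nonneg (by linarith)])
      | (left; rw [abs_of_nonpos (by linarith), neg_sub])
lemma psd_cauchy_schwarz {ι : Type*} [Fintype ι] {M : Matrix ι ι ℝ}
    (hM : M.PosSemidef) (x y : ι → ℝ) :
    (x ⬝ᵥ M *ᵥ y) ^ 2 ≤ (x ⬝ᵥ M *ᵥ x) * (y ⬝ᵥ M *ᵥ y) := by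
  have hsymm : ∀ a b : ι → ℝ, a ⬝ᵥ M *ᵥ b = b ⬝ᵥ M *ᵥ a := by
    intro a b
    have hM' : Mᵀ = M := by
      have := hM.1
      rwa [Matrix.IsHermitian, conjTranspose_eq_transpose_of_trivial] at this
    calc a ⬝ᵥ M *ᵥ b = M *ᵥ a ⬝ᵥ b := by
          rw [Matrix.dotProduct_mulVec, ← Matrix.mulVec_transpose, hM',
            dotProduct_comm]
      _ = b ⬝ᵥ M *ᵥ a := dotProduct_comm _ _
  have key : ∀ lam : ℝ, 0 ≤ (y ⬝ᵥ M *ᵥ y) * (lam * lam)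
      + (2 * (x ⬝ᵥ M *ᵥ y)) * lam + (x ⬝ᵥ M *ᵥ x) := by
    intro lam
    have h0 := hM.dotProduct_mulVec_nonneg (x + lam • y)
    simp only [star_trivial] at h0
    have hexp : (x + lam • y) ⬝ᵥ M *ᵥ (x + lam • y)
        = (y ⬝ᵥ M *ᵥ y) * (lam * lam) + (2 * (x ⬝ᵥ M *ᵥ y)) * lam + (x ⬝ᵥ M *ᵥ x) := by
      rw [Matrix.mulVec_add, Matrix.mulVec_smul, dotProduct_add,
        add_dotProduct, add_dotProduct, dotProduct_smul,
        smul_dotProduct, smul_dotProduct, dotProduct_smul,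
        hsymm y x]
      simp [smul_eq_mul]; ring
    rw [hexp] at h0; exact h0
  have hd := discrim_le_zero key
  rw [discrim] at hd
  nlinarith [hd]

lemma sum_inv_bounds {ι X : Type*} [Fintype ι] [DecidableEq ι] [Fintype X]
    [DecidableEq X] [Nonempty X]
    (M W : Matrix ι ι ℝ) (hMpsd : M.PosSemidef) (hMW : M * W = 1) (hWM : W * M = 1)
    (hdiag : ∀ q, M q q = 1)
    (f' : X → ι) (hf' : Function.Injective f')
    (Z : Matrix X X ℝ) (hZM : ∀ s r, Z s r = M (f' s) (f' r)) :
    1 ≤ (∑ s, ∑ r, Z⁻¹ s r) ∧ (∑ s, ∑ r, Z⁻¹ s r) ≤ ∑ q, ∑ p, W q p := by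
  classical
  -- lift
  have hlift_f' : ∀ (c : X → ℝ) s, (fun q => ∑ s', if f' s' = q then c s' else 0) (f' s) = c s := by
    intro c s
    simp only
    rw [Finset.sum_eq_single s]
    · simp
    · intro r _ hrs
      have : f' r ≠ f' s := fun h => hrs (hf' h)
      simp [this]
    · intro h; exact absurd (Finset.mem_univ s) h
  have hdot_lift : ∀ (c : X → ℝ) (g : ι → ℝ),
      (fun q => ∑ s', if f' s' = q then c s' else 0) ⬝ᵥ g = ∑ s, c s * g (f' s) := by
    intro c g
    calc (fun q => ∑ s', if f' s' = q then c s' else 0) ⬝ᵥ g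
        = ∑ q, ∑ s, (if f' s = q then c s * g q else 0) := by
          simp [dotProduct, Finset.sum_mul, ite_mul]
      _ = ∑ s, ∑ q, (if f' s = q then c s * g q else 0) := Finset.sum_comm
      _ = ∑ s, c s * g (f' s) := by simp
  have hmulVec_lift : ∀ (c : X → ℝ) q,
      (M *ᵥ (fun q => ∑ s', if f' s' = q then c s' else 0)) q = ∑ s, M q (f' s) * c s := by
    intro c q
    have h1 : (M *ᵥ (fun q => ∑ s', if f' s' = q then c s' else 0)) q
        = (fun q' => ∑ s', if f' s' = q' then c s' else 0) ⬝ᵥ (fun p => M q p) := by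
      simp [Matrix.mulVec, dotProduct, mul_comm]
    rw [h1, hdot_lift]
    simp [mul_comm]
  -- invertibility of Z
  have hdet : Z.det ≠ 0 := by
    intro h0
    obtain ⟨c, hc0, hc⟩ := (Matrix.exists_mulVec_eq_zero_iff).mpr h0
    have hMs : ∀ s, (M *ᵥ (fun q => ∑ s', if f' s' = q then c s' else 0)) (f' s) = 0 := by
      intro s
      rw [hmulVec_lift]
      calc ∑ r, M (f' s) (f' r) * c r = ∑ r, Z s r * c r :=
            Finset.sum_congr rfl fun r _ => by rw [hZM]
        _ = (Z *ᵥ c) s := rfl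
        _ = 0 := by rw [hc]; rfl
    have hq : (fun q => ∑ s', if f' s' = q then c s' else 0) ⬝ᵥ
        (M *ᵥ (fun q => ∑ s', if f' s' = q then c s' else 0)) = 0 := by
      rw [hdot_lift]
      simp only [hMs, mul_zero, Finset.sum_const_zero]
    have hker : M *ᵥ (fun q => ∑ s', if f' s' = q then c s' else 0) = 0 := by
      refine (hMpsd.dotProduct_mulVec_zero_iff _).mp ?_
      simpa [star_trivial] using hq
    have hlc : (fun q => ∑ s', if f' s' = q then c s' else 0) = (0 : ι → ℝ) := by
      have h1 : W *ᵥ (M *ᵥ (fun q => ∑ s', if f' s' = q then c s' else 0))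
          = (fun q => ∑ s', if f' s' = q then c s' else 0) := by
        rw [Matrix.mulVec_mulVec, hWM, Matrix.one_mulVec]
      rw [hker, Matrix.mulVec_zero] at h1
      exact h1.symm
    obtain ⟨s0, hs0⟩ := Function.ne_iff.mp hc0
    have h2 := hlift_f' c s0
    rw [hlc] at h2
    exact hs0 (by simpa using h2.symm)
  have hZunit : IsUnit Z.det := isUnit_iff_ne_zero.mpr hdet
  have hZv : Z *ᵥ (Z⁻¹ *ᵥ (fun _ => 1)) = fun _ => 1 := by
    rw [Matrix.mulVec_mulVec, Matrix.mul_nonsing_inv _ hZunit, Matrix.one_mulVec]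
  set v : X → ℝ := Z⁻¹ *ᵥ (fun _ => 1) with hvdef
  have hmsum : (∑ s : X, ∑ r : X, Z⁻¹ s r) = ∑ s, v s := by
    rw [hvdef]
    simp [Matrix.mulVec, dotProduct]
  set m := ∑ s, v s with hmdef
  have hMv_f' : ∀ s, (M *ᵥ (fun q => ∑ s', if f' s' = q then v s' else 0)) (f' s) = 1 := by
    intro s
    rw [hmulVec_lift]
    calc ∑ r, M (f' s) (f' r) * v r = ∑ r, Z s r * v r :=
          Finset.sum_congr rfl fun r _ => by rw [hZM]
      _ = (Z *ᵥ v) s := rfl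
      _ = 1 := by rw [hZv]
  have hvMv : (fun q => ∑ s', if f' s' = q then v s' else 0) ⬝ᵥ
      (M *ᵥ (fun q => ∑ s', if f' s' = q then v s' else 0)) = m := by
    rw [hdot_lift, hmdef]
    exact Finset.sum_congr rfl fun s _ => by rw [hMv_f', mul_one]
  have s0 : X := Classical.arbitrary X
  have hlow : 1 ≤ m := by
    have h1 : (Pi.single (f' s0) (1:ℝ)) ⬝ᵥ
        (M *ᵥ (fun q => ∑ s', if f' s' = q then v s' else 0)) = 1 := by
      rw [single_dotProduct, hMv_f' s0, mul_one]
    have h2 : (Pi.single (f' s0) (1:ℝ)) ⬝ᵥ (M *ᵥ (Pi.single (f' s0) (1:ℝ))) = 1 := by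
      rw [Matrix.mulVec_single, single_dotProduct]
      simp [hdiag]
    have := psd_cauchy_schwarz hMpsd (Pi.single (f' s0) (1:ℝ))
      (fun q => ∑ s', if f' s' = q then v s' else 0)
    rw [h1, h2, hvMv, one_pow, one_mul] at this
    exact this
  have hMwY : M *ᵥ (W *ᵥ (fun _ => 1)) = fun _ => 1 := by
    rw [Matrix.mulVec_mulVec, hMW, Matrix.one_mulVec]
  have hvw : (fun q => ∑ s', if f' s' = q then v s' else 0) ⬝ᵥ
      (M *ᵥ (W *ᵥ (fun _ => 1))) = m := by
    rw [hMwY, hdot_lift, hmdef]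
    simp
  have hww : (W *ᵥ (fun _ => 1)) ⬝ᵥ (M *ᵥ (W *ᵥ (fun _ => 1))) = ∑ q, ∑ p, W q p := by
    rw [hMwY]
    simp [dotProduct, Matrix.mulVec]
  have hup : m ≤ ∑ q, ∑ p, W q p := by
    have hcs := psd_cauchy_schwarz hMpsd
      (fun q => ∑ s', if f' s' = q then v s' else 0) (W *ᵥ (fun _ => 1))
    rw [hvw, hvMv, hww] at hcs
    nlinarith [hcs, hlow]
  exact ⟨by rw [hmsum]; exact hlow, by rw [hmsum]; exact hup⟩


lemma kron_sum (A B : Matrix (Fin 4) (Fin 4) ℝ) :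
    ∑ q : Fin 4 × Fin 4, ∑ p : Fin 4 × Fin 4, (A ⊗ₖ B) q p
      = (∑ i, ∑ j, A i j) * (∑ i, ∑ j, B i j) := by
  calc ∑ q : Fin 4 × Fin 4, ∑ p : Fin 4 × Fin 4, (A ⊗ₖ B) q p
      = ∑ i, ∑ i', (∑ j, A i j) * (∑ j', B i' j') := by
        rw [Fintype.sum_prod_type]
        refine Finset.sum_congr rfl fun i _ => Finset.sum_congr rfl fun i' _ => ?_
        rw [Finset.sum_mul_sum, Fintype.sum_prod_type]
        rfl
    _ = (∑ i, ∑ j, A i j) * (∑ i, ∑ j, B i j) := (Finset.sum_mul_sum _ _ _ _).symm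

lemma bounds {X : Type*} [MetricSpace X] [Fintype X] [DecidableEq X] [Nonempty X]
    (x y : X → ℝ) (hxy : ∀ a b : X, dist a b = |x a - x b| + |y a - y b|)
    (a b : Fin 4 → ℝ) (ha : StrictMono a) (hb : StrictMono b)
    (hax : ∀ s, ∃ k, a k = x s) (hby : ∀ s, ∃ k, b k = y s)
    {t : ℝ} (ht : 0 < t) :
    1 ≤ (∑ s : X, ∑ r : X, (Matrix.of fun s r : X => Real.exp (-t * dist s r))⁻¹ s r) ∧
      (∑ s : X, ∑ r : X, (Matrix.of fun s r : X => Real.exp (-t * dist s r))⁻¹ s r) ≤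
        Sline (a 1 - a 0) (a 2 - a 1) (a 3 - a 2) t *
        Sline (b 1 - b 0) (b 2 - b 1) (b 3 - b 2) t := by
  classical
  have expIoo : ∀ {p q : ℝ}, p < q → Real.exp (-(t*(q - p))) ∈ Set.Ioo (0:ℝ) 1 := by
    intro p q hpq
    refine ⟨Real.exp_pos _, ?_⟩
    rw [← Real.exp_zero]
    exact Real.exp_lt_exp.mpr (by nlinarith)
  have ha01 := expIoo (ha (show (0:Fin 4) < 1 by decide))
  have ha12 := expIoo (ha (show (1:Fin 4) < 2 by decide))
  have ha23 := expIoo (ha (show (2:Fin 4) < 3 by decide))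
  have hb01 := expIoo (hb (show (0:Fin 4) < 1 by decide))
  have hb12 := expIoo (hb (show (1:Fin 4) < 2 by decide))
  have hb23 := expIoo (hb (show (2:Fin 4) < 3 by decide))
  have sqne : ∀ {z : ℝ}, z ∈ Set.Ioo (0:ℝ) 1 → z^2 ≠ 1 := by
    intro z hz; nlinarith [hz.1, hz.2]
  have sqle : ∀ {z : ℝ}, z ∈ Set.Ioo (0:ℝ) 1 → z^2 ≤ 1 := by
    intro z hz; nlinarith [hz.1, hz.2]
  -- the two line matrices
  have hEAT : E4 (Real.exp (-(t*(a 1 - a 0)))) (Real.exp (-(t*(a 2 - a 1)))) (Real.exp (-(t*(a 3 - a 2))))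
      * T4 (Real.exp (-(t*(a 1 - a 0)))) (Real.exp (-(t*(a 2 - a 1)))) (Real.exp (-(t*(a 3 - a 2)))) = 1 :=
    E4_mul_T4 (sqne ha01) (sqne ha12) (sqne ha23)
  have hEBT : E4 (Real.exp (-(t*(b 1 - b 0)))) (Real.exp (-(t*(b 2 - b 1)))) (Real.exp (-(t*(b 3 - b 2))))
      * T4 (Real.exp (-(t*(b 1 - b 0)))) (Real.exp (-(t*(b 2 - b 1)))) (Real.exp (-(t*(b 3 - b 2)))) = 1 :=
    E4_mul_T4 (sqne hb01) (sqne hb12) (sqne hb23)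
  set EA := E4 (Real.exp (-(t*(a 1 - a 0)))) (Real.exp (-(t*(a 2 - a 1)))) (Real.exp (-(t*(a 3 - a 2)))) with hEAdef
  set EB := E4 (Real.exp (-(t*(b 1 - b 0)))) (Real.exp (-(t*(b 2 - b 1)))) (Real.exp (-(t*(b 3 - b 2)))) with hEBdef
  set TA := T4 (Real.exp (-(t*(a 1 - a 0)))) (Real.exp (-(t*(a 2 - a 1)))) (Real.exp (-(t*(a 3 - a 2)))) with hTAdef
  set TB := T4 (Real.exp (-(t*(b 1 - b 0)))) (Real.exp (-(t*(b 2 - b 1)))) (Real.exp (-(t*(b 3 - b 2)))) with hTBdef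
  have hMW : (EA ⊗ₖ EB) * (TA ⊗ₖ TB) = 1 := by
    rw [← Matrix.mul_kronecker_mul, hEAT, hEBT, Matrix.one_kronecker_one]
  have hWM : (TA ⊗ₖ TB) * (EA ⊗ₖ EB) = 1 := by
    have hMT : (EA ⊗ₖ EB)ᵀ = EA ⊗ₖ EB := by
      rw [← Matrix.kroneckerMap_transpose]
      rw [hEAdef, hEBdef, E4_transpose, E4_transpose]
    have hWT : (TA ⊗ₖ TB)ᵀ = TA ⊗ₖ TB := by
      rw [← Matrix.kroneckerMap_transpose]
      rw [hTAdef, hTBdef, T4_transpose, T4_transpose]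
    calc (TA ⊗ₖ TB) * (EA ⊗ₖ EB)
        = ((EA ⊗ₖ EB)ᵀ * (TA ⊗ₖ TB)ᵀ)ᵀ := by
          rw [Matrix.transpose_mul, Matrix.transpose_transpose, Matrix.transpose_transpose]
      _ = 1 := by rw [hMT, hWT, hMW, Matrix.transpose_one]
  have hMpsd : (EA ⊗ₖ EB).PosSemidef := by
    have hfac : (G4 (Real.exp (-(t*(a 1 - a 0)))) (Real.exp (-(t*(a 2 - a 1)))) (Real.exp (-(t*(a 3 - a 2))))
        ⊗ₖ G4 (Real.exp (-(t*(b 1 - b 0)))) (Real.exp (-(t*(b 2 - b 1)))) (Real.exp (-(t*(b 3 - b 2)))))ᴴ *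
        (G4 (Real.exp (-(t*(a 1 - a 0)))) (Real.exp (-(t*(a 2 - a 1)))) (Real.exp (-(t*(a 3 - a 2))))
        ⊗ₖ G4 (Real.exp (-(t*(b 1 - b 0)))) (Real.exp (-(t*(b 2 - b 1)))) (Real.exp (-(t*(b 3 - b 2)))))
        = EA ⊗ₖ EB := by
      rw [conjTranspose_eq_transpose_of_trivial, ← Matrix.kroneckerMap_transpose,
        ← Matrix.mul_kronecker_mul, G4_factor (sqle ha01) (sqle ha12) (sqle ha23),
        G4_factor (sqle hb01) (sqle hb12) (sqle hb23), hEAdef, hEBdef]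
    rw [← hfac]
    exact Matrix.posSemidef_conjTranspose_mul_self _
  have hdiagM : ∀ q : Fin 4 × Fin 4, (EA ⊗ₖ EB) q q = 1 := by
    intro q
    have : (EA ⊗ₖ EB) q q = EA q.1 q.1 * EB q.2 q.2 := rfl
    rw [this, hEAdef, hEBdef, E4_diag _ _ _ q.1, E4_diag _ _ _ q.2, mul_one]
  -- index map
  have hEAexp := E4_exp t a ha
  have hEBexp := E4_exp t b hb
  have f1spec : ∀ s, a (hax s).choose = x s := fun s => (hax s).choose_spec
  have f2spec : ∀ s, b (hby s).choose = y s := fun s => (hby s).choose_spec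
  have hf'inj : Function.Injective (fun s => ((hax s).choose, (hby s).choose) : X → Fin 4 × Fin 4) := by
    intro s r h
    have hx1 : x s = x r := by
      rw [← f1spec s, ← f1spec r]; exact congrArg a (congrArg Prod.fst h)
    have hy1 : y s = y r := by
      rw [← f2spec s, ← f2spec r]; exact congrArg b (congrArg Prod.snd h)
    have : dist s r = 0 := by rw [hxy, hx1, hy1]; simp
    exact dist_eq_zero.mp this
  have hZM : ∀ s r : X, (Matrix.of fun s r : X => Real.exp (-t * dist s r)) s r
      = (EA ⊗ₖ EB) ((hax s).choose, (hby s).choose) ((hax r).choose, (hby r).choose) := by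
    intro s r
    have h1 := hEAexp (hax s).choose (hax r).choose
    have h2 := hEBexp (hby s).choose (hby r).choose
    rw [hEAdef, hEBdef]
    calc (Matrix.of fun s r : X => Real.exp (-t * dist s r)) s r
        = Real.exp (-t * dist s r) := rfl
      _ = Real.exp (-t * |a (hax s).choose - a (hax r).choose|) *
          Real.exp (-t * |b (hby s).choose - b (hby r).choose|) := by
          rw [← Real.exp_add, Real.exp_eq_exp, f1spec, f1spec, f2spec, f2spec, hxy s r]
          ring
      _ = _ := by rw [← h1, ← h2]; rfl
  have hmain := sum_inv_bounds (EA ⊗ₖ EB) (TA ⊗ₖ TB) hMpsd hMW hWM hdiagM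
    (fun s => ((hax s).choose, (hby s).choose)) hf'inj
    (Matrix.of fun s r : X => Real.exp (-t * dist s r)) hZM
  have hWsum : ∑ q : Fin 4 × Fin 4, ∑ p : Fin 4 × Fin 4, (TA ⊗ₖ TB) q p
      = Sline (a 1 - a 0) (a 2 - a 1) (a 3 - a 2) t *
        Sline (b 1 - b 0) (b 2 - b 1) (b 3 - b 2) t := by
    rw [kron_sum, hTAdef, hTBdef,
      T4_sum ha01.1 ha01.2 ha12.1 ha12.2 ha23.1 ha23.2,
      T4_sum hb01.1 hb01.2 hb12.1 hb12.2 hb23.1 hb23.2]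
    rfl
  exact ⟨hmain.1, by rw [← hWsum]; exact hmain.2⟩


lemma tendsto_Sline (g1 g2 g3 : ℝ) :
    Tendsto (fun t => Sline g1 g2 g3 t) (𝓝 0) (𝓝 1) := by
  have h : ∀ g : ℝ, Continuous fun t : ℝ =>
      (1 - Real.exp (-(t*g)))/(1 + Real.exp (-(t*g))) := by
    intro g
    apply Continuous.div
    · fun_prop
    · fun_prop
    · intro x
      positivity
  have hc : Continuous fun t : ℝ => Sline g1 g2 g3 t := by
    unfold Sline
    exact ((continuous_const.add (h g1)).add (h g2)).add (h g3)
  have h0 : Sline g1 g2 g3 0 = 1 := by simp [Sline]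
  simpa [h0] using hc.tendsto 0


lemma emb4_base (d : Fin 4 → Fin 4 → ℝ)
    (hsym : ∀ i j, d i j = d j i) (hzero : ∀ i, d i i = 0)
    (htri : ∀ i j k, d i k ≤ d i j + d j k)
    (hmax2 : d 0 2 + d 1 3 ≤ d 0 1 + d 2 3)
    (hmax3 : d 0 3 + d 1 2 ≤ d 0 1 + d 2 3) :
    ∃ x y : Fin 4 → ℝ, ∀ i j, |x i - x j| + |y i - y j| = d i j := by
  have f1 : d 2 3 ≤ d 0 2 + d 0 3 := by
    have := htri 2 0 3; rw [hsym 2 0] at this; linarith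
  have f2 : d 2 3 ≤ d 1 2 + d 1 3 := by
    have := htri 2 1 3; rw [hsym 2 1] at this; linarith
  have f3 : d 0 1 ≤ d 0 2 + d 1 2 := by
    have := htri 0 2 1; rw [hsym 2 1] at this; linarith
  have f4 : d 0 1 ≤ d 0 3 + d 1 3 := by
    have := htri 0 3 1; rw [hsym 3 1] at this; linarith
  set q := (d 0 1 + d 2 3 - d 0 2 - d 1 3)/2 with hq
  set r := (d 0 1 + d 2 3 - d 0 3 - d 1 2)/2 with hr
  refine ⟨![0, d 0 1 - r, (d 0 1 + d 0 2 - d 1 2)/2 - r, (d 0 1 + d 0 2 - d 1 2)/2 - r + q],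
    ![(d 0 3 + d 1 3 - d 0 1)/2, (d 0 3 + d 1 3 - d 0 1)/2 + r,
      (d 0 3 + d 1 3 - d 0 1)/2 + r + (d 0 2 + d 1 2 - d 0 1)/2, 0], ?_⟩
  have hd01 : (0:ℝ) ≤ d 0 1 := by have := htri 0 1 0; rw [hzero 0, hsym 1 0] at this; linarith
  have hd23 : (0:ℝ) ≤ d 2 3 := by have := htri 2 3 2; rw [hzero 2, hsym 3 2] at this; linarith
  refine fin4_all ?_ ?_ ?_ ?_ <;> refine fin4_all ?_ ?_ ?_ ?_ <;>
    simp [Matrix.vecHead, Matrix.vecTail] <;>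
    first
      | exact (hzero _).symm
      | (rw [abs_of_nonneg (by linarith), abs_of_nonneg (by linarith)];
         linarith [hsym 1 0, hsym 2 0, hsym 2 1, hsym 3 0, hsym 3 1, hsym 3 2])
      | (rw [abs_of_nonneg (by linarith), abs_of_nonpos (by linarith)];
         linarith [hsym 1 0, hsym 2 0, hsym 2 1, hsym 3 0, hsym 3 1, hsym 3 2])
      | (rw [abs_of_nonpos (by linarith), abs_of_nonneg (by linarith)];
         linarith [hsym 1 0, hsym 2 0, hsym 2 1, hsym 3 0, hsym 3 1, hsym 3 2])
      | (rw [abs_of_nonpos (by linarith), abs_of_nonpos (by linarith)];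
         linarith [hsym 1 0, hsym 2 0, hsym 2 1, hsym 3 0, hsym 3 1, hsym 3 2])


lemma emb4_relabel (d : Fin 4 → Fin 4 → ℝ) (σ : Fin 4 → Fin 4) (hinv : ∀ i, σ (σ i) = i)
    (h : ∃ x y : Fin 4 → ℝ, ∀ i j, |x i - x j| + |y i - y j| = d (σ i) (σ j)) :
    ∃ x y : Fin 4 → ℝ, ∀ i j, |x i - x j| + |y i - y j| = d i j := by
  obtain ⟨x, y, hxy⟩ := h
  refine ⟨x ∘ σ, y ∘ σ, fun i j => ?_⟩
  have := hxy (σ i) (σ j)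
  rwa [hinv, hinv] at this

lemma emb4 (d : Fin 4 → Fin 4 → ℝ)
    (hsym : ∀ i j, d i j = d j i) (hzero : ∀ i, d i i = 0)
    (htri : ∀ i j k, d i k ≤ d i j + d j k) :
    ∃ x y : Fin 4 → ℝ, ∀ i j, |x i - x j| + |y i - y j| = d i j := by
  rcases le_total (d 0 2 + d 1 3) (d 0 1 + d 2 3) with h21 | h21
  · rcases le_total (d 0 3 + d 1 2) (d 0 1 + d 2 3) with h31 | h31
    · exact emb4_base d hsym hzero htri h21 h31
    · -- d 0 3 + d 1 2 is maximal
      refine emb4_relabel d ![0,3,2,1] (by decide) ?_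
      refine emb4_base _ (fun i j => hsym _ _) (fun i => hzero _)
        (fun i j k => htri _ _ _) ?_ ?_
      · have e02 : (![0,3,2,1] : Fin 4 → Fin 4) 2 = 2 := by decide
        have e01 : (![0,3,2,1] : Fin 4 → Fin 4) 1 = 3 := by decide
        have e00 : (![0,3,2,1] : Fin 4 → Fin 4) 0 = 0 := by decide
        have e03 : (![0,3,2,1] : Fin 4 → Fin 4) 3 = 1 := by decide
        rw [e00, e01, e02, e03]
        linarith [hsym 3 1, hsym 2 1, h21, h31]
      · have e00 : (![0,3,2,1] : Fin 4 → Fin 4) 0 = 0 := by decide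
        have e01 : (![0,3,2,1] : Fin 4 → Fin 4) 1 = 3 := by decide
        have e02 : (![0,3,2,1] : Fin 4 → Fin 4) 2 = 2 := by decide
        have e03 : (![0,3,2,1] : Fin 4 → Fin 4) 3 = 1 := by decide
        rw [e00, e01, e02, e03]
        linarith [hsym 3 2, hsym 2 1, h31]
  · rcases le_total (d 0 3 + d 1 2) (d 0 2 + d 1 3) with h32 | h32
    · -- d 0 2 + d 1 3 is maximal
      refine emb4_relabel d ![0,2,1,3] (by decide) ?_
      refine emb4_base _ (fun i j => hsym _ _) (fun i => hzero _)
        (fun i j k => htri _ _ _) ?_ ?_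
      · have e00 : (![0,2,1,3] : Fin 4 → Fin 4) 0 = 0 := by decide
        have e01 : (![0,2,1,3] : Fin 4 → Fin 4) 1 = 2 := by decide
        have e02 : (![0,2,1,3] : Fin 4 → Fin 4) 2 = 1 := by decide
        have e03 : (![0,2,1,3] : Fin 4 → Fin 4) 3 = 3 := by decide
        rw [e00, e01, e02, e03]
        linarith [hsym 2 1, h21]
      · have e00 : (![0,2,1,3] : Fin 4 → Fin 4) 0 = 0 := by decide
        have e01 : (![0,2,1,3] : Fin 4 → Fin 4) 1 = 2 := by decide
        have e02 : (![0,2,1,3] : Fin 4 → Fin 4) 2 = 1 := by decide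
        have e03 : (![0,2,1,3] : Fin 4 → Fin 4) 3 = 3 := by decide
        rw [e00, e01, e02, e03]
        linarith [hsym 2 1, h32]
    · -- d 0 3 + d 1 2 is maximal
      refine emb4_relabel d ![0,3,2,1] (by decide) ?_
      refine emb4_base _ (fun i j => hsym _ _) (fun i => hzero _)
        (fun i j k => htri _ _ _) ?_ ?_
      · have e00 : (![0,3,2,1] : Fin 4 → Fin 4) 0 = 0 := by decide
        have e01 : (![0,3,2,1] : Fin 4 → Fin 4) 1 = 3 := by decide
        have e02 : (![0,3,2,1] : Fin 4 → Fin 4) 2 = 2 := by decide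
        have e03 : (![0,3,2,1] : Fin 4 → Fin 4) 3 = 1 := by decide
        rw [e00, e01, e02, e03]
        linarith [hsym 3 1, hsym 2 1, h21, h32]
      · have e00 : (![0,3,2,1] : Fin 4 → Fin 4) 0 = 0 := by decide
        have e01 : (![0,3,2,1] : Fin 4 → Fin 4) 1 = 3 := by decide
        have e02 : (![0,3,2,1] : Fin 4 → Fin 4) 2 = 2 := by decide
        have e03 : (![0,3,2,1] : Fin 4 → Fin 4) 3 = 1 := by decide
        rw [e00, e01, e02, e03]
        linarith [hsym 3 2, hsym 2 1, h21, h32]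

lemma exists_xy {X : Type*} [MetricSpace X] [Fintype X] [Nonempty X]
    (h : Fintype.card X ≤ 4) :
    ∃ x y : X → ℝ, ∀ a b : X, dist a b = |x a - x b| + |y a - y b| := by
  classical
  obtain ⟨ι⟩ : Nonempty (X ↪ Fin 4) :=
    Function.Embedding.nonempty_of_card_le (by simpa using h)
  have hinh : Inhabited X := Classical.inhabited_of_nonempty ‹_›
  obtain ⟨x0, y0, hx0⟩ := emb4
    (fun k l => dist ((fun k => if h' : ∃ s, ι s = k then h'.choose else default) k)
      ((fun k => if h' : ∃ s, ι s = k then h'.choose else default) l))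
    (fun i j => dist_comm _ _) (fun i => dist_self _) (fun i j k => dist_triangle _ _ _)
  have hπ : ∀ s : X, (fun k => if h' : ∃ s, ι s = k then h'.choose else default) (ι s) = s := by
    intro s
    have hex : ∃ s', ι s' = ι s := ⟨s, rfl⟩
    simp only [dif_pos hex]
    exact ι.injective hex.choose_spec
  refine ⟨fun s => x0 (ι s), fun s => y0 (ι s), fun p q => ?_⟩
  calc dist p q
      = dist ((fun k => if h' : ∃ s, ι s = k then h'.choose else default) (ι p))
        ((fun k => if h' : ∃ s, ι s = k then h'.choose else default) (ι q)) := by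
        rw [hπ, hπ]
    _ = |x0 (ι p) - x0 (ι q)| + |y0 (ι p) - y0 (ι q)| := (hx0 (ι p) (ι q)).symm

lemma exists_grid {X : Type*} [Fintype X] (x : X → ℝ) (h : Fintype.card X ≤ 4) :
    ∃ a : Fin 4 → ℝ, StrictMono a ∧ ∀ s, ∃ k, a k = x s := by
  classical
  have hcard : (Finset.image x Finset.univ).card ≤ 4 :=
    le_trans (Finset.card_image_le) (by simpa using h)
  obtain ⟨sA, hsub, hsAcard⟩ := Infinite.exists_superset_card_eq (Finset.image x Finset.univ) 4 hcard
  refine ⟨fun k => ((sA.orderIsoOfFin hsAcard) k : ℝ), ?_, ?_⟩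
  · intro k l hkl
    exact_mod_cast (sA.orderIsoOfFin hsAcard).strictMono hkl
  · intro s
    have hmem : x s ∈ sA := hsub (Finset.mem_image_of_mem x (Finset.mem_univ s))
    obtain ⟨k, hk⟩ := (sA.orderIsoOfFin hsAcard).surjective ⟨x s, hmem⟩
    exact ⟨k, by simp [hk]⟩

end FourPtAux

open Filter Topology FourPtAux

/-- Every metric space with at most 4 points embeds isometrically into `ℝ²` with the `ℓ¹`
metric, and hence (by Leinster–Meckes) has the one-point property. -/
theorem fourPoint_embeds_l1 {X : Type*} [MetricSpace X] [Fintype X] [DecidableEq X]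
    [Nonempty X] (h : Fintype.card X ≤ 4) :
    (∃ f : X → PiLp 1 (fun _ : Fin 2 => ℝ), Isometry f) ∧
    Tendsto (fun t : ℝ => ∑ a : X, ∑ b : X,
        (Matrix.of fun a b : X => Real.exp (-t * dist a b))⁻¹ a b)
      (𝓝[>] (0 : ℝ)) (𝓝 1) := by
  classical
  obtain ⟨x, y, hxy⟩ := exists_xy h
  constructor
  · refine ⟨fun s => (WithLp.equiv 1 (∀ _ : Fin 2, ℝ)).symm ![x s, y s], ?_⟩
    apply Isometry.of_dist_eq
    intro p q
    rw [PiLp.dist_eq_sum (by norm_num : 0 < (1 : ENNReal).toReal)]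
    simp only [ENNReal.toReal_one, Real.rpow_one, div_one, WithLp.equiv_symm_apply, PiLp.toLp_apply,
      Fin.sum_univ_two, Real.dist_eq]
    simp only [Matrix.cons_val_zero, Matrix.cons_val_one, Matrix.head_cons]
    exact (hxy p q).symm
  · obtain ⟨a, ha, hax⟩ := exists_grid x h
    obtain ⟨b, hb, hby⟩ := exists_grid y h
    have hub : Tendsto (fun t : ℝ =>
        Sline (a 1 - a 0) (a 2 - a 1) (a 3 - a 2) t *
        Sline (b 1 - b 0) (b 2 - b 1) (b 3 - b 2) t) (𝓝[>] (0:ℝ)) (𝓝 1) := by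
      have := (tendsto_Sline (a 1 - a 0) (a 2 - a 1) (a 3 - a 2)).mul
        (tendsto_Sline (b 1 - b 0) (b 2 - b 1) (b 3 - b 2))
      rw [mul_one] at this
      exact this.mono_left nhdsWithin_le_nhds
    refine tendsto_of_tendsto_of_tendsto_of_le_of_le' tendsto_const_nhds hub ?_ ?_
    · filter_upwards [self_mem_nhdsWithin] with t ht
      exact (bounds x y hxy a b ha hb hax hby ht).1
    · filter_upwards [self_mem_nhdsWithin] with t ht
      exact (bounds x y hxy a b ha hb hax hby ht).2
end
end

section
/- For every real number R ≥ 1 there exists a finite metric space X such that lim_{t→0+}|tX| = R, where |tX| is the magnitude of X at scale t. -/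
open Filter Topology

/-- `MagTendsto X R` says that the magnitude function of the finite metric space `X`,
i.e. the sum of the entries of the inverse of `(exp(−t·d(x,y)))`, tends to `R` as `t → 0+`. -/
def MagTendsto (X : Type) [MetricSpace X] [Fintype X] [DecidableEq X] (R : ℝ) : Prop :=
  Filter.Tendsto (fun t : ℝ => ∑ a : X, ∑ b : X,
      (Matrix.of fun a b : X => Real.exp (-t * dist a b))⁻¹ a b)
    (𝓝[>] (0 : ℝ)) (𝓝 R)

open Filter Topology Matrix

namespace MagProof

def sdist (r s : ℝ) {N : ℕ} (x y : Fin N ⊕ Fin N) : ℝ :=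
  if x = y then 0 else
    match x, y with
    | .inl _, .inl _ => r
    | .inr _, .inr _ => s
    | _, _ => 1

variable {N : ℕ} {r s : ℝ}

@[simp] theorem sdist_ll (i j : Fin N) : sdist r s (.inl i) (.inl j) = if i = j then 0 else r := by
  simp only [sdist, Sum.inl.injEq]
@[simp] theorem sdist_rr (i j : Fin N) : sdist r s (.inr i) (.inr j) = if i = j then 0 else s := by
  simp only [sdist, Sum.inr.injEq]
@[simp] theorem sdist_lr (i j : Fin N) : sdist r s (.inl i) (.inr j) = 1 := by
  simp only [sdist]; rw [if_neg (by simp)]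
@[simp] theorem sdist_rl (i j : Fin N) : sdist r s (.inr i) (.inl j) = 1 := by
  simp only [sdist]; rw [if_neg (by simp)]

noncomputable def smetric (N : ℕ) (r s : ℝ) (hr : 0 < r) (hr2 : r ≤ 2) (hs : 0 < s)
    (hs2 : s ≤ 2) : MetricSpace (Fin N ⊕ Fin N) where
  dist := sdist r s
  dist_self x := by rcases x with i | i <;> simp
  dist_comm x y := by
    rcases x with i | i <;> rcases y with j | j <;> simp [eq_comm]
  dist_triangle x y z := by
    rcases x with i | i <;> rcases y with j | j <;> rcases z with k | k <;>
      simp only [sdist_ll, sdist_rr, sdist_lr, sdist_rl] <;> split_ifs <;>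
        first | linarith | (subst_vars; simp_all)
  eq_of_dist_eq_zero := by
    intro x y h
    rcases x with i | i <;> rcases y with j | j <;>
      simp only [sdist_ll, sdist_rr, sdist_lr, sdist_rl] at h
    · split_ifs at h with hij
      · exact congrArg _ hij
      · exact absurd h (by linarith)
    · exact absurd h (by norm_num)
    · exact absurd h (by norm_num)
    · split_ifs at h with hij
      · exact congrArg _ hij
      · exact absurd h (by linarith)

/-! ### Scalar data for the inverse matrix -/

noncomputable section

def A1 (n a : ℝ) : ℝ := 1 + (n - 1) * a
def Dd (n a b g : ℝ) : ℝ := A1 n a * A1 n b - n ^ 2 * g ^ 2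
def al (a : ℝ) : ℝ := 1 / (1 - a)
def ga (n a b g : ℝ) : ℝ := -g / Dd n a b g
def be (n a b g : ℝ) : ℝ := -(a * al a + n * g * ga n a b g) / A1 n a

theorem Dd_symm (n a b g : ℝ) : Dd n a b g = Dd n b a g := by unfold Dd; ring
theorem ga_symm (n a b g : ℝ) : ga n a b g = ga n b a g := by unfold ga; rw [Dd_symm]

theorem e1 {a : ℝ} (ha : 1 - a ≠ 0) : (1 - a) * al a = 1 := by
  unfold al; field_simp

theorem e2 {n a b g : ℝ} (hA : A1 n a ≠ 0) :
    a * al a + A1 n a * be n a b g + n * g * ga n a b g = 0 := by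
  unfold be; field_simp; ring

theorem e3 {n a b g : ℝ} (hb : 1 - b ≠ 0) (hB : A1 n b ≠ 0) (hD : Dd n a b g ≠ 0) :
    A1 n a * ga n a b g + g * al b + n * g * be n b a g = 0 := by
  have hD' : Dd n b a g ≠ 0 := by rwa [← Dd_symm]
  unfold be al ga
  field_simp
  unfold Dd A1 at *
  ring_nf

theorem sum_formula {n a b g : ℝ} (ha : 1 - a ≠ 0) (hb : 1 - b ≠ 0) (hA : A1 n a ≠ 0)
    (hB : A1 n b ≠ 0) (hD : Dd n a b g ≠ 0) :
    n * al a + n ^ 2 * be n a b g + n * al b + n ^ 2 * be n b a g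
      + 2 * n ^ 2 * ga n a b g =
    n * (A1 n a + A1 n b - 2 * n * g) / Dd n a b g := by
  have hD' : Dd n b a g ≠ 0 := by rwa [← Dd_symm]
  unfold be al ga
  field_simp
  unfold Dd A1 at *
  ring

/-! ### The exponential entries -/

def Ef (c t : ℝ) : ℝ := Real.exp (-(t * c))

theorem Ef_zero (c : ℝ) : Ef c 0 = 1 := by simp [Ef]

theorem Ef_pos (c t : ℝ) : 0 < Ef c t := Real.exp_pos _

theorem hasDerivAt_Ef (c t : ℝ) : HasDerivAt (fun u => Ef c u) (-c * Ef c t) t := by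
  unfold Ef
  have h : HasDerivAt (fun u : ℝ => -(u * c)) (-c) t := by
    have := ((hasDerivAt_id t).mul_const c).neg; simp only [id, one_mul] at this; exact this
  simpa [Function.comp_def, mul_comm] using (Real.hasDerivAt_exp (-(t * c))).comp t h

theorem continuous_Ef (c : ℝ) : Continuous fun t => Ef c t := by
  unfold Ef; fun_prop

/-! ### Block matrices -/

def Jm (N : ℕ) : Matrix (Fin N) (Fin N) ℝ := Matrix.of fun _ _ => 1

def blk (N : ℕ) (x y : ℝ) : Matrix (Fin N) (Fin N) ℝ := x • 1 + y • Jm N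

theorem Jm_mul_Jm (N : ℕ) : Jm N * Jm N = (N : ℝ) • Jm N := by
  ext i j
  simp [Jm, Matrix.mul_apply, Matrix.smul_apply]

theorem blk_mul (N : ℕ) (x y u v : ℝ) :
    blk N x y * blk N u v = blk N (x * u) (x * v + y * u + N * y * v) := by
  unfold blk
  rw [add_mul, mul_add, mul_add, smul_mul_smul_comm, smul_mul_smul_comm,
    smul_mul_smul_comm, smul_mul_smul_comm, Jm_mul_Jm]
  simp only [one_mul, mul_one, smul_smul]
  module

theorem blk_one (N : ℕ) : blk N 1 0 = 1 := by unfold blk; simp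
theorem blk_add (N : ℕ) (x y u v : ℝ) : blk N x y + blk N u v = blk N (x + u) (y + v) := by
  unfold blk; module
theorem blk_congr {N : ℕ} {x y x' y' : ℝ} (h1 : x = x') (h2 : y = y') :
    blk N x y = blk N x' y' := by rw [h1, h2]

theorem blk_apply (N : ℕ) (x y : ℝ) (i j : Fin N) :
    blk N x y i j = (if i = j then x else 0) + y := by
  simp [blk, Jm, Matrix.one_apply, mul_ite]

theorem blk_sum (N : ℕ) (x y : ℝ) :
    ∑ i : Fin N, ∑ j : Fin N, blk N x y i j = N * x + N ^ 2 * y := by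
  simp [blk_apply, Finset.sum_add_distrib, Finset.sum_ite_eq]
  ring

/-- The magnitude matrix as a block matrix. -/
theorem Z_eq_blocks (N : ℕ) (t r s : ℝ) :
    (Matrix.of fun x y : Fin N ⊕ Fin N => Real.exp (-t * sdist r s x y)) =
      Matrix.fromBlocks
        (blk N (1 - Ef r t) (Ef r t))
        (blk N 0 (Ef 1 t)) (blk N 0 (Ef 1 t))
        (blk N (1 - Ef s t) (Ef s t)) := by
  unfold Ef
  ext x y
  rcases x with i | i <;> rcases y with j | j <;>
    simp only [Matrix.of_apply, sdist_ll, sdist_rr, sdist_lr, sdist_rl,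
      Matrix.fromBlocks_apply₁₁, Matrix.fromBlocks_apply₁₂, Matrix.fromBlocks_apply₂₁,
      Matrix.fromBlocks_apply₂₂, blk_apply] <;>
    split_ifs <;> simp [neg_mul]

/-- Explicit inverse of the magnitude matrix. -/
def Wmat (N : ℕ) (a b g : ℝ) : Matrix (Fin N ⊕ Fin N) (Fin N ⊕ Fin N) ℝ :=
  Matrix.fromBlocks
    (blk N (al a) (be N a b g)) (blk N 0 (ga N a b g))
    (blk N 0 (ga N a b g)) (blk N (al b) (be N b a g))

theorem Z_mul_W (N : ℕ) {a b g : ℝ} (ha : 1 - a ≠ 0) (hb : 1 - b ≠ 0)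
    (hA : A1 N a ≠ 0) (hB : A1 N b ≠ 0) (hD : Dd N a b g ≠ 0) :
    Matrix.fromBlocks (blk N (1 - a) a) (blk N 0 g) (blk N 0 g) (blk N (1 - b) b)
      * Wmat N a b g = 1 := by
  rw [Wmat, Matrix.fromBlocks_multiply, ← Matrix.fromBlocks_one]
  simp only [blk_mul, blk_add]
  have h1 := e1 ha
  have h1' := e1 hb
  have h2 := e2 (b := b) (g := g) hA
  have h2' := e2 (a := b) (b := a) (g := g) hB
  rw [ga_symm (N : ℝ) b a g] at h2'
  have h3 := e3 (a := a) hb hB hD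
  have h3' := e3 (a := b) (b := a) (g := g) ha hA (by rwa [← Dd_symm])
  rw [ga_symm (N : ℝ) b a g] at h3'
  unfold A1 at h2 h2' h3 h3'
  unfold al at h1 h1' h2 h2' h3 h3'
  unfold al
  rw [← blk_one N, Matrix.fromBlocks_inj]
  refine ⟨blk_congr ?_ ?_, ?_, ?_, blk_congr ?_ ?_⟩
  · linear_combination h1
  · linear_combination h2
  · rw [show (0 : Matrix (Fin N) (Fin N) ℝ) = blk N 0 0 by unfold blk; simp]
    exact blk_congr (by ring) (by linear_combination h3)
  · rw [show (0 : Matrix (Fin N) (Fin N) ℝ) = blk N 0 0 by unfold blk; simp]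
    exact blk_congr (by ring) (by linear_combination h3')
  · linear_combination h1'
  · linear_combination h2'

theorem W_sum (N : ℕ) {a b g : ℝ} (ha : 1 - a ≠ 0) (hb : 1 - b ≠ 0) (hA : A1 N a ≠ 0)
    (hB : A1 N b ≠ 0) (hD : Dd N a b g ≠ 0) :
    ∑ x : Fin N ⊕ Fin N, ∑ y : Fin N ⊕ Fin N, Wmat N a b g x y =
      N * (A1 N a + A1 N b - 2 * N * g) / Dd N a b g := by
  rw [← sum_formula ha hb hA hB hD]
  simp only [Wmat, Fintype.sum_sum_type, Matrix.fromBlocks_apply₁₁,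
    Matrix.fromBlocks_apply₁₂, Matrix.fromBlocks_apply₂₁, Matrix.fromBlocks_apply₂₂]
  simp only [Finset.sum_add_distrib, blk_sum]
  ring
theorem tendsto_div_sq {f f' f'' : ℝ → ℝ}
    (h1 : ∀ x, HasDerivAt f (f' x) x) (h2 : ∀ x, HasDerivAt f' (f'' x) x)
    (hc : Continuous f'') (h0 : f 0 = 0) (h0' : f' 0 = 0) :
    Tendsto (fun t => f t / t ^ 2) (𝓝[>] (0:ℝ)) (𝓝 (f'' 0 / 2)) := by
  have hf' : Tendsto f' (𝓝[>] (0:ℝ)) (𝓝 0) := by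
    have := ((h2 0).continuousAt.tendsto).mono_left (nhdsWithin_le_nhds (s := Set.Ioi (0:ℝ)))
    rwa [h0'] at this
  have hf : Tendsto f (𝓝[>] (0:ℝ)) (𝓝 0) := by
    have := ((h1 0).continuousAt.tendsto).mono_left (nhdsWithin_le_nhds (s := Set.Ioi (0:ℝ)))
    rwa [h0] at this
  have key2 : Tendsto (fun x => f' x / (2 * x)) (𝓝[>] (0:ℝ)) (𝓝 (f'' 0 / 2)) := by
    apply HasDerivAt.lhopital_zero_nhdsGT (f' := f'') (g' := fun _ => (2:ℝ))
    · exact Eventually.of_forall h2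
    · exact Eventually.of_forall fun x => by simpa using (hasDerivAt_id x).const_mul (2:ℝ)
    · exact Eventually.of_forall fun _ => two_ne_zero
    · exact hf'
    · have : Tendsto (fun x : ℝ => 2 * x) (𝓝 (0:ℝ)) (𝓝 (2 * 0)) :=
        (continuous_const.mul continuous_id).tendsto 0
      simpa using this.mono_left nhdsWithin_le_nhds
    · exact ((hc.tendsto 0).mono_left nhdsWithin_le_nhds).div_const 2
  apply HasDerivAt.lhopital_zero_nhdsGT (f' := f') (g' := fun x : ℝ => 2 * x)
  · exact Eventually.of_forall h1
  · exact Eventually.of_forall fun x => by simpa [mul_comm] using hasDerivAt_pow 2 x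
  · filter_upwards [self_mem_nhdsWithin] with x hx
    have : (0:ℝ) < x := hx
    positivity
  · exact hf
  · have : Tendsto (fun x : ℝ => x ^ 2) (𝓝 (0:ℝ)) (𝓝 ((0:ℝ) ^ 2)) :=
      (continuous_pow 2).tendsto 0
    simpa using this.mono_left nhdsWithin_le_nhds
  · exact key2

/-! ### The numerator and denominator functions and their derivatives -/

def Ff (n r s t : ℝ) : ℝ := A1 n (Ef r t) + A1 n (Ef s t) - 2 * n * Ef 1 t
def Ff1 (n r s t : ℝ) : ℝ :=
  (n - 1) * (-r * Ef r t) + (n - 1) * (-s * Ef s t) - 2 * n * (-1 * Ef 1 t)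
def Ff2 (n r s t : ℝ) : ℝ :=
  (n - 1) * (-r * (-r * Ef r t)) + (n - 1) * (-s * (-s * Ef s t))
    - 2 * n * (-1 * (-1 * Ef 1 t))

def Pp (n c t : ℝ) : ℝ := A1 n (Ef c t)
def P1 (n c t : ℝ) : ℝ := (n - 1) * (-c * Ef c t)
def P2 (n c t : ℝ) : ℝ := (n - 1) * (-c * (-c * Ef c t))

def Df (n r s t : ℝ) : ℝ := Pp n r t * Pp n s t - n ^ 2 * (Ef 1 t * Ef 1 t)
def Df1 (n r s t : ℝ) : ℝ :=
  P1 n r t * Pp n s t + Pp n r t * P1 n s t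
    - n ^ 2 * (-1 * Ef 1 t * Ef 1 t + Ef 1 t * (-1 * Ef 1 t))
def Df2 (n r s t : ℝ) : ℝ :=
  P2 n r t * Pp n s t + P1 n r t * P1 n s t + (P1 n r t * P1 n s t + Pp n r t * P2 n s t)
    - n ^ 2 * (-1 * (-1 * Ef 1 t) * Ef 1 t + -1 * Ef 1 t * (-1 * Ef 1 t)
        + (-1 * Ef 1 t * (-1 * Ef 1 t) + Ef 1 t * (-1 * (-1 * Ef 1 t))))

theorem hasDerivAt_Pp (n c t : ℝ) : HasDerivAt (fun u => Pp n c u) (P1 n c t) t := by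
  unfold Pp P1 A1
  exact (((hasDerivAt_Ef c t).const_mul (n - 1)).const_add 1)

theorem hasDerivAt_P1 (n c t : ℝ) : HasDerivAt (fun u => P1 n c u) (P2 n c t) t := by
  unfold P1 P2
  exact ((hasDerivAt_Ef c t).const_mul (-c)).const_mul (n - 1)

theorem hasDerivAt_Ff (n r s t : ℝ) : HasDerivAt (fun u => Ff n r s u) (Ff1 n r s t) t := by
  unfold Ff Ff1 A1
  exact ((((hasDerivAt_Ef r t).const_mul (n-1)).const_add 1).add
    (((hasDerivAt_Ef s t).const_mul (n-1)).const_add 1)).sub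
      ((hasDerivAt_Ef 1 t).const_mul (2*n))

theorem hasDerivAt_Ff1 (n r s t : ℝ) : HasDerivAt (fun u => Ff1 n r s u) (Ff2 n r s t) t := by
  unfold Ff1 Ff2
  exact ((((hasDerivAt_Ef r t).const_mul (-r)).const_mul (n-1)).add
    (((hasDerivAt_Ef s t).const_mul (-s)).const_mul (n-1))).sub
      (((hasDerivAt_Ef 1 t).const_mul (-1)).const_mul (2*n))

theorem hasDerivAt_Df (n r s t : ℝ) : HasDerivAt (fun u => Df n r s u) (Df1 n r s t) t := by
  unfold Df Df1
  exact ((hasDerivAt_Pp n r t).mul (hasDerivAt_Pp n s t)).sub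
    (((hasDerivAt_Ef 1 t).mul (hasDerivAt_Ef 1 t)).const_mul (n^2))

theorem hasDerivAt_Df1 (n r s t : ℝ) : HasDerivAt (fun u => Df1 n r s u) (Df2 n r s t) t := by
  unfold Df1 Df2
  exact (((hasDerivAt_P1 n r t).mul (hasDerivAt_Pp n s t)).add
      ((hasDerivAt_Pp n r t).mul (hasDerivAt_P1 n s t))).sub
    (((((hasDerivAt_Ef 1 t).const_mul (-1)).mul (hasDerivAt_Ef 1 t)).add
      ((hasDerivAt_Ef 1 t).mul ((hasDerivAt_Ef 1 t).const_mul (-1)))).const_mul (n^2))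

theorem continuous_Ff2 (n r s : ℝ) : Continuous fun t => Ff2 n r s t := by
  unfold Ff2 Ef; fun_prop

theorem continuous_Df2 (n r s : ℝ) : Continuous fun t => Df2 n r s t := by
  unfold Df2 P2 P1 Pp A1 Ef; fun_prop

theorem Ff_zero (n r s : ℝ) : Ff n r s 0 = 0 := by simp [Ff, A1, Ef]; ring
theorem Df_zero (n r s : ℝ) : Df n r s 0 = 0 := by simp [Df, Pp, A1, Ef]; ring

theorem Ff1_zero {n r s : ℝ} (hsum : (n - 1) * (r + s) = 2 * n) : Ff1 n r s 0 = 0 := by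
  simp only [Ff1, Ef_zero]; linear_combination -hsum

theorem Df1_zero {n r s : ℝ} (hsum : (n - 1) * (r + s) = 2 * n) : Df1 n r s 0 = 0 := by
  simp only [Df1, P1, Pp, A1, Ef_zero]; linear_combination (-n) * hsum

/-- Value of the second derivatives at `0`. -/
def F20 (n r s : ℝ) : ℝ := (n - 1) * r ^ 2 + (n - 1) * s ^ 2 - 2 * n
def D20 (n r s : ℝ) : ℝ :=
  n * (n - 1) * r ^ 2 + n * (n - 1) * s ^ 2 + 2 * (n - 1) ^ 2 * r * s - 4 * n ^ 2

theorem Ff2_zero (n r s : ℝ) : Ff2 n r s 0 = F20 n r s := by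
  simp only [Ff2, F20, Ef_zero]; ring
theorem Df2_zero (n r s : ℝ) : Df2 n r s 0 = D20 n r s := by
  simp only [Df2, P2, P1, Pp, A1, D20, Ef_zero]; ring

theorem Df_eq_Dd (n r s t : ℝ) : Df n r s t = Dd n (Ef r t) (Ef s t) (Ef 1 t) := by
  unfold Df Dd Pp; ring

/-! ### The main limit computation -/

theorem main_tendsto (N : ℕ) (hN : 2 ≤ N) (r s : ℝ) (hr : 0 < r) (hs : 0 < s)
    (hsum : ((N : ℝ) - 1) * (r + s) = 2 * N) (hD20 : D20 (N : ℝ) r s ≠ 0) :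
    Tendsto (fun t : ℝ => ∑ x : Fin N ⊕ Fin N, ∑ y : Fin N ⊕ Fin N,
        (Matrix.of fun x y : Fin N ⊕ Fin N => Real.exp (-t * sdist r s x y))⁻¹ x y)
      (𝓝[>] (0 : ℝ)) (𝓝 ((N : ℝ) * F20 (N : ℝ) r s / D20 (N : ℝ) r s)) := by
  set n : ℝ := (N : ℝ) with hn
  have hn2 : (2 : ℝ) ≤ n := by rw [hn]; exact_mod_cast hN
  -- limits of numerator and denominator over t^2
  have l1 : Tendsto (fun t => Ff n r s t / t ^ 2) (𝓝[>] (0:ℝ)) (𝓝 (Ff2 n r s 0 / 2)) :=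
    tendsto_div_sq (hasDerivAt_Ff n r s) (hasDerivAt_Ff1 n r s) (continuous_Ff2 n r s)
      (Ff_zero n r s) (Ff1_zero hsum)
  have l2 : Tendsto (fun t => Df n r s t / t ^ 2) (𝓝[>] (0:ℝ)) (𝓝 (Df2 n r s 0 / 2)) :=
    tendsto_div_sq (hasDerivAt_Df n r s) (hasDerivAt_Df1 n r s) (continuous_Df2 n r s)
      (Df_zero n r s) (Df1_zero hsum)
  rw [Ff2_zero] at l1
  rw [Df2_zero] at l2
  have hD2 : D20 n r s / 2 ≠ 0 := div_ne_zero hD20 two_ne_zero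
  have l3 := (l1.const_mul n).div l2 hD2
  have hval : n * (F20 n r s / 2) / (D20 n r s / 2) = n * F20 n r s / D20 n r s := by
    field_simp
  rw [hval] at l3
  -- eventually the denominator is nonzero
  have hDne : ∀ᶠ t in 𝓝[>] (0:ℝ), Df n r s t ≠ 0 := by
    filter_upwards [l2.eventually_ne hD2, self_mem_nhdsWithin] with t h1 h2 h
    exact h1 (by rw [h]; simp)
  -- replace by the simplified quotient
  have l4 : Tendsto (fun t => n * Ff n r s t / Df n r s t) (𝓝[>] (0:ℝ))
      (𝓝 (n * F20 n r s / D20 n r s)) := by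
    apply l3.congr'
    filter_upwards [self_mem_nhdsWithin, hDne] with t ht hD
    have ht2 : (t : ℝ) ^ 2 ≠ 0 := pow_ne_zero _ (ne_of_gt ht)
    simp only [Pi.div_apply]
    field_simp
    exact mul_div_cancel_right₀ _ (ne_of_gt ht)
  -- identify the magnitude with the explicit formula, eventually
  apply l4.congr'
  filter_upwards [self_mem_nhdsWithin, hDne] with t ht hD
  have htr : -(t * r) < 0 := by rw [Set.mem_Ioi] at ht; nlinarith
  have hts : -(t * s) < 0 := by rw [Set.mem_Ioi] at ht; nlinarith
  have ha : 1 - Ef r t ≠ 0 := by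
    have : Ef r t < 1 := Real.exp_lt_one_iff.2 htr
    linarith
  have hb : 1 - Ef s t ≠ 0 := by
    have : Ef s t < 1 := Real.exp_lt_one_iff.2 hts
    linarith
  have hA : A1 n (Ef r t) ≠ 0 := by
    have h1 := Ef_pos r t
    unfold A1; nlinarith
  have hB : A1 n (Ef s t) ≠ 0 := by
    have h1 := Ef_pos s t
    unfold A1; nlinarith
  have hDd : Dd n (Ef r t) (Ef s t) (Ef 1 t) ≠ 0 := by rwa [← Df_eq_Dd]
  have hZW := Z_mul_W N ha hb hA hB hDd
  have hZ : (Matrix.of fun x y : Fin N ⊕ Fin N => Real.exp (-t * sdist r s x y))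
      * Wmat N (Ef r t) (Ef s t) (Ef 1 t) = 1 := by
    rw [Z_eq_blocks]; exact hZW
  rw [Matrix.inv_eq_right_inv hZ, W_sum N ha hb hA hB hDd, ← Df_eq_Dd]
  rfl

/-! ### Choosing the distances by the intermediate value theorem -/

theorem exists_r (R : ℝ) (hR : 1 ≤ R) (N : ℕ) (hN5 : 5 ≤ N) (hNR : 2 * R + 3 ≤ (N : ℝ)) :
    ∃ r s : ℝ, 0 < r ∧ r ≤ 2 ∧ 0 < s ∧ s ≤ 2 ∧ ((N : ℝ) - 1) * (r + s) = 2 * N ∧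
      D20 (N : ℝ) r s ≠ 0 ∧ (N : ℝ) * F20 (N : ℝ) r s / D20 (N : ℝ) r s = R := by
  set n : ℝ := (N : ℝ) with hn
  have hn5 : (5 : ℝ) ≤ n := by rw [hn]; exact_mod_cast hN5
  have hc : 0 < n - 1 := by linarith
  have hcne : n - 1 ≠ 0 := hc.ne'
  set K : ℝ := 2 * n / (n - 1) with hK
  have hKsum : ∀ r : ℝ, (n - 1) * (r + (K - r)) = 2 * n := by
    intro r; rw [hK]; field_simp; ring
  have hpos : ∀ r : ℝ, 0 < D20 n r (K - r) := by
    intro r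
    have hsum := hKsum r
    have key : (n - 1) * D20 n r (K - r)
        = 4 * n ^ 2 - 2 * ((n - 1) * r) * ((n - 1) * (K - r)) := by
      unfold D20; linear_combination (n * ((n - 1) * (r + (K - r)) + 2 * n)) * hsum
    have huv : ((n - 1) * r) * ((n - 1) * (K - r)) ≤ n ^ 2 := by
      nlinarith [sq_nonneg ((n - 1) * r - (n - 1) * (K - r)), hsum]
    have h2 : 2 * n ^ 2 ≤ (n - 1) * D20 n r (K - r) := by nlinarith [key, huv]
    by_contra hle
    push_neg at hle
    have : (n - 1) * D20 n r (K - r) ≤ 0 := mul_nonpos_of_nonneg_of_nonpos hc.le hle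
    nlinarith [this, h2, sq_nonneg n, hn5]
  have hcont : Continuous fun r : ℝ => n * F20 n r (K - r) / D20 n r (K - r) := by
    apply Continuous.div
    · unfold F20; fun_prop
    · unfold D20; fun_prop
    · exact fun r => (hpos r).ne'
  have hKhalf : K - n / (n - 1) = n / (n - 1) := by rw [hK]; field_simp; ring
  have hval1 : n * F20 n (n / (n - 1)) (K - n / (n - 1)) / D20 n (n / (n - 1)) (K - n / (n - 1)) = 1 := by
    rw [hKhalf, div_eq_iff (hpos (n / (n - 1)) |>.ne' |> fun h => by rwa [hKhalf] at h)]
    unfold F20 D20; field_simp; ring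
  have hs2def : K - 2 = 2 / (n - 1) := by rw [hK]; field_simp; ring
  have hval2 : R ≤ n * F20 n 2 (K - 2) / D20 n 2 (K - 2) := by
    rw [le_div_iff₀ (hpos 2)]
    have key2 : n * F20 n 2 (K - 2) - R * D20 n 2 (K - 2)
        = (2 * n ^ 3 - 6 * n ^ 2 - 4 * R * n ^ 2 + 8 * n + 8 * R * n - 8 * R) / (n - 1) := by
      unfold F20 D20; rw [hs2def]; field_simp; ring
    have hpoly : 0 ≤ 2 * n ^ 3 - 6 * n ^ 2 - 4 * R * n ^ 2 + 8 * n + 8 * R * n - 8 * R := by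
      nlinarith [mul_nonneg (sq_nonneg n) (by linarith : (0:ℝ) ≤ n - (2 * R + 3)),
        mul_nonneg (by linarith : (0:ℝ) ≤ R) (by linarith : (0:ℝ) ≤ n - 1), hR, hn5]
    have := div_nonneg hpoly hc.le
    linarith [key2 ▸ this]
  have h12 : n / (n - 1) ≤ 2 := by rw [div_le_iff₀ hc]; linarith
  have hmem : R ∈ Set.Icc
      ((fun r : ℝ => n * F20 n r (K - r) / D20 n r (K - r)) (n / (n - 1)))
      ((fun r : ℝ => n * F20 n r (K - r) / D20 n r (K - r)) 2) := by
    simp only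
    rw [hval1]
    exact ⟨hR, hval2⟩
  obtain ⟨r, hrmem, hφr⟩ := intermediate_value_Icc h12 hcont.continuousOn hmem
  simp only at hφr
  rw [Set.mem_Icc] at hrmem
  have hrpos : 0 < r := lt_of_lt_of_le (div_pos (by linarith) hc) hrmem.1
  have hK2 : 2 < K := by rw [hK, lt_div_iff₀ hc]; linarith
  refine ⟨r, K - r, hrpos, hrmem.2, by linarith [hrmem.2], ?_, hKsum r, (hpos r).ne', hφr⟩
  have : K - n / (n - 1) = n / (n - 1) := hKhalf
  linarith [hrmem.1, h12]
end
end MagProof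

/-- For every real `R ≥ 1` there is a finite metric space whose magnitude tends to `R`
at small scales. -/
theorem smallScale_limit_arbitrary (R : ℝ) (hR : 1 ≤ R) :
    ∃ (X : Type) (m : MetricSpace X) (f : Fintype X) (d : DecidableEq X),
      @MagTendsto X m f d R := by
  set N : ℕ := ⌈2 * R⌉₊ + 5 with hNdef
  have hN5 : 5 ≤ N := by omega
  have hNR : 2 * R + 3 ≤ (N : ℝ) := by
    have h1 := Nat.le_ceil (2 * R)
    have h2 : ((⌈2 * R⌉₊ : ℕ) : ℝ) + 5 = (N : ℝ) := by rw [hNdef]; push_cast; ring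
    linarith
  obtain ⟨r, s, hr, hr2, hs, hs2, hsum, hD20, hφ⟩ := MagProof.exists_r R hR N hN5 hNR
  refine ⟨Fin N ⊕ Fin N, MagProof.smetric N r s hr hr2 hs hs2, inferInstance, inferInstance, ?_⟩
  unfold MagTendsto
  have h := MagProof.main_tendsto N (by omega) r s hr hs hsum hD20
  rw [hφ] at h
  exact h
end
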